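/- arXiv:2505.05461 — 4 statements merged into one kernel-verified Lean document; each statement's English description precedes it below -/
import Mathlib

section
/- Let ξ be a connected core graph of type (g, n, r), i.e. a connected graph of first Betti number g−1 with n legs and an admissible marking (a distinguished vertex v with a set D of r marked flags adjacent to v) such that no marked flag is a leg, all neutral vertices have valence at least 3, all tadpoles are at the distinguished vertex, and no tadpole has both flags marked. Then n ≤ 3(g−1) + 2(n−r). -/
/-- A finite graph with a marking, following Payne–Willwacher: a finite nonempty set
of vertices `V`, a finite set of flags (half-edges) `F`, an adjacency map `a`, an
involution `ι` (whose 2-element orbits are edges and whose fixed points are legs),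
together with a distinguished vertex `dv` and a set `marked ⊆ a⁻¹(dv)` of marked
flags. -/
structure MGraph where
  V : Type
  F : Type
  [fintypeV : Fintype V]
  [fintypeF : Fintype F]
  [decV : DecidableEq V]
  [decF : DecidableEq F]
  nonemptyV : Nonempty V
  a : F → V
  ι : F → F
  ι_invol : ∀ f, ι (ι f) = f
  dv : V
  marked : Finset F
  marked_adj : ∀ f ∈ marked, a f = dv

namespace MGraph

attribute [instance] fintypeV fintypeF decV decF

variable (G : MGraph)

/-- The number of legs (fixed flags). -/
noncomputable def numLegs : ℕ := Fintype.card {f : G.F // G.ι f = f}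

/-- The number of edges (2-element orbits of the involution). -/
noncomputable def numEdges : ℕ := Fintype.card {f : G.F // G.ι f ≠ f} / 2

/-- Two vertices are adjacent if some edge joins them. -/
def Adj (v w : G.V) : Prop := ∃ f, G.ι f ≠ f ∧ G.a f = v ∧ G.a (G.ι f) = w

/-- The graph is connected. -/
def Connected : Prop := ∀ v w : G.V, Relation.ReflTransGen G.Adj v w

/-- Admissibility of the marking: stability (neutral vertices have valence ≥ 3),
no neutral tadpoles, and no doubly-marked edges. -/
def Admissible : Prop :=
  (∀ w : G.V, w ≠ G.dv → 3 ≤ Fintype.card {f : G.F // G.a f = w}) ∧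
  (∀ f : G.F, G.ι f ≠ f → G.a f = G.a (G.ι f) → G.a f = G.dv) ∧
  (∀ f ∈ G.marked, G.ι f ∈ G.marked → G.ι f = f)

/-- A core graph has no marked legs. -/
def NoMarkedLegs : Prop := ∀ f ∈ G.marked, G.ι f ≠ f

/-- The graph is of type `(g, n, r)`: first Betti number `g − 1`
(i.e. `|E| − |V| + 1 = g − 1`, written additively), `n` legs and `r` marked flags. -/
def IsType (g n r : ℕ) : Prop :=
  G.numEdges + 2 = Fintype.card G.V + g ∧ G.numLegs = n ∧ G.marked.card = r

end MGraph

/-! Count flags. Legs and edges give `|F| = n + 2|E|`; the neutral vertices have valence at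
least 3 and the `r` marked flags sit at the distinguished vertex, so `|F| ≥ 3(|V| − 1) + r`;
and the marked flags lie on `r` distinct edges, so `r ≤ |E|`. With `|E| = |V| + g − 2`
these combine linearly to `2r ≤ 3(g − 1) + n`. -/

theorem Function.Involutive.two_dvd_card_ne {α : Type*} [Fintype α] [DecidableEq α]
    {f : α → α} (hf : Function.Involutive f) : 2 ∣ Fintype.card {x // f x ≠ x} := by
  rw [Fintype.card_subtype]
  exact Equiv.Perm.two_dvd_card_support (σ := hf.toPerm f) (Equiv.ext fun x => hf x)

namespace MGraph

variable (G : MGraph)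

theorem ι_involutive : Function.Involutive G.ι := G.ι_invol

theorem two_mul_numEdges : 2 * G.numEdges = Fintype.card {f : G.F // G.ι f ≠ f} :=
  Nat.mul_div_cancel' G.ι_involutive.two_dvd_card_ne

theorem numLegs_add_two_mul_numEdges : G.numLegs + 2 * G.numEdges = Fintype.card G.F := by
  rw [two_mul_numEdges, numLegs, Fintype.card_subtype_compl,
    Nat.add_sub_cancel' (Fintype.card_subtype_le _)]

theorem card_marked_le_numEdges (hcore : G.NoMarkedLegs)
    (hdbl : ∀ f ∈ G.marked, G.ι f ∈ G.marked → G.ι f = f) :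
    G.marked.card ≤ G.numEdges := by
  have hdisj : Disjoint G.marked (G.marked.image G.ι) :=
    Finset.disjoint_left.mpr fun f hf hf' => by
      obtain ⟨m, hm, rfl⟩ := Finset.mem_image.mp hf'
      exact hcore m hm (hdbl m hm hf)
  have hsub : G.marked ∪ G.marked.image G.ι ⊆ Finset.univ.filter (fun f => G.ι f ≠ f) := by
    refine Finset.union_subset (fun f hf => ?_) (Finset.image_subset_iff.mpr fun m hm => ?_)
    · simpa using hcore f hf
    · simpa [G.ι_invol] using (hcore m hm).symm
  have := Finset.card_le_card hsub
  rw [Finset.card_union_of_disjoint hdisj,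
    Finset.card_image_of_injective _ G.ι_involutive.injective, ← Fintype.card_subtype,
    ← two_mul_numEdges] at this
  omega

def valence (v : G.V) : ℕ := Fintype.card {f : G.F // G.a f = v}

theorem sum_valence : ∑ v, G.valence v = Fintype.card G.F :=
  (Fintype.card_sigma).symm.trans (Fintype.card_congr (Equiv.sigmaFiberEquiv G.a))

theorem card_marked_le_valence_dv : G.marked.card ≤ G.valence G.dv := by
  rw [valence, Fintype.card_subtype]
  exact Finset.card_le_card fun f hf =>
    Finset.mem_filter.mpr ⟨Finset.mem_univ f, G.marked_adj f hf⟩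

theorem card_marked_add_three_mul_le_card_flags
    (hstable : ∀ w : G.V, w ≠ G.dv → 3 ≤ G.valence w) :
    G.marked.card + 3 * (Fintype.card G.V - 1) ≤ Fintype.card G.F := by
  have hneutral : 3 * (Fintype.card G.V - 1) ≤ ∑ w ∈ Finset.univ.erase G.dv, G.valence w := by
    simpa [Finset.card_erase_of_mem, mul_comm] using
      Finset.card_nsmul_le_sum (Finset.univ.erase G.dv) G.valence 3
        fun w hw => hstable w (Finset.ne_of_mem_erase hw)
  rw [← G.sum_valence, ← Finset.add_sum_erase _ _ (Finset.mem_univ G.dv)]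
  exact Nat.add_le_add G.card_marked_le_valence_dv hneutral

end MGraph

theorem core_graph_leg_bound_general (G : MGraph) (g n r : ℕ)
    (hadm : G.Admissible) (hcore : G.NoMarkedLegs)
    (htype : G.IsType g n r) :
    (n : ℤ) ≤ 3 * ((g : ℤ) - 1) + 2 * ((n : ℤ) - (r : ℤ)) := by
  obtain ⟨hstable, -, hdbl⟩ := hadm
  obtain ⟨hbetti, rfl, rfl⟩ := htype
  have hflags := G.numLegs_add_two_mul_numEdges
  have hmarked := G.card_marked_le_numEdges hcore hdbl
  have hvalence := G.card_marked_add_three_mul_le_card_flags hstable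
  have hV : 0 < Fintype.card G.V := Fintype.card_pos_iff.mpr G.nonemptyV
  omega

/-- a connected core graph (admissible marking, no marked legs) of type
`(g, n, r)` satisfies `n ≤ 3(g−1) + 2(n−r)`. -/
theorem core_graph_leg_bound (G : MGraph) (g n r : ℕ)
    (hconn : G.Connected) (hadm : G.Admissible) (hcore : G.NoMarkedLegs)
    (htype : G.IsType g n r) :
    (n : ℤ) ≤ 3 * ((g : ℤ) - 1) + 2 * ((n : ℤ) - (r : ℤ)) :=
  core_graph_leg_bound_general G g n r hadm hcore htype
end

section
/- Let m = 2y + p with y, p ≥ 0. Define Λ(y, p) to be the multiset of partitions of ⌈3m/2⌉ of the form 1^{⌈m/2⌉} + η + π, where η is a partition of 2y with all parts even, π is a sequence of y+1 non-negative integers summing to p, and the Pieri condition π_{i+1} + η_{i+1} ≤ η_i holds for all i (indices padded by zeros; the sum is taken entrywise). Then: (a) every element of Λ(y, p) has exactly ⌈m/2⌉ parts; (b) the multiplicity of a partition μ of ⌈3m/2⌉ in Λ(y, p) equals the Littlewood–Richardson multiplicity of V_{μ'} in Ind_{S_{2y} × S_p}^{S_m}((⊕_{τ ⊢ y} V_{2τ})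 ⊠ triv), where μ' is the partition of m obtained by deleting the first column of μ. -/
/-- A partition: an antitone, eventually-zero sequence of natural-number parts.
`parts 0` is the largest part. -/
structure Partn where
  parts : ℕ → ℕ
  antitone' : ∀ ⦃i j : ℕ⦄, i ≤ j → parts j ≤ parts i
  bdd : ∃ N, parts N = 0

namespace Partn

theorem ext' {p q : Partn} (h : p.parts = q.parts) : p = q := by
  cases p; cases q; simpa using h

/-- The number of (nonzero) parts, i.e. the number of rows of the Young diagram. -/
noncomputable def numParts (p : Partn) : ℕ := Nat.find p.bdd

/-- The size of the partition (the number it partitions). -/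
noncomputable def size (p : Partn) : ℕ := ∑ i ∈ Finset.range p.numParts, p.parts i

/-- ν/η is a horizontal strip (Pieri rule for inducing with the trivial rep). -/
def HStrip (η ν : Partn) : Prop :=
  (∀ i, η.parts i ≤ ν.parts i) ∧ (∀ i, ν.parts (i + 1) ≤ η.parts i)

/-- ν/η is a vertical strip (Pieri rule for inducing with the sign rep). -/
def VStrip (η ν : Partn) : Prop :=
  (∀ i, η.parts i ≤ ν.parts i) ∧ (∀ i, ν.parts i ≤ η.parts i + 1)

/-- μ is the partition (n − |λ|, λ₁, …, λ_k) of n, obtained by padding λ with a new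
first part. -/
def IsPad (l : Partn) (n : ℕ) (μ : Partn) : Prop :=
  μ.size = n ∧ μ.parts 0 = n - l.size ∧ l.size + l.parts 0 ≤ n ∧
    ∀ i, μ.parts (i + 1) = l.parts i

/-- The conjugate partition. -/
noncomputable def conj (p : Partn) : Partn where
  parts i := Nat.find (p := fun j => p.parts j ≤ i)
    ⟨Nat.find p.bdd, le_of_eq_of_le (Nat.find_spec p.bdd) (Nat.zero_le i)⟩
  antitone' := by
    intro i j hij
    exact Nat.find_mono fun k hk => le_trans hk hij
  bdd := by
    refine ⟨p.parts 0, ?_⟩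
    have : p.parts 0 ≤ p.parts 0 := le_refl _
    simpa using Nat.find_eq_zero _ |>.mpr this

/-- A representation of Sₙ, recorded by its multiplicity function on partitions of n:
`A μ` is the multiplicity of the irreducible V_μ. -/
abbrev RepM := Partn → ℕ

/-- Church–Farb (uniform) representation stability at `N` for a consistent sequence,
expressed via multiplicities: for `n ≥ N` the multiplicity of each padded irreducible
V(λ)ₙ is independent of `n`, and irreducibles whose padding does not exist at level `N`
do not occur.  (Axioms (1) and (2) of Church–Farb, injectivity and generation, hold
automatically for the sequences considered here.) -/
def StableAt (A : ℕ → RepM) (N : ℕ) : Prop :=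
  (∀ n, N ≤ n → ∀ (l μ μ' : Partn), IsPad l n μ → IsPad l (n + 1) μ' →
    A n μ = A (n + 1) μ') ∧
  (∀ n, N ≤ n → ∀ μ : Partn, μ.size = n →
    N < (n - μ.parts 0) + μ.parts 1 → A n μ = 0)

/-- Sharp stabilization at `N`: stable at `N` but not at `N − 1`. -/
def SharplyStableAt (A : ℕ → RepM) (N : ℕ) : Prop :=
  StableAt A N ∧ ¬ StableAt A (N - 1)

end Partn

namespace Partn

/-- The partition `2λ` obtained by doubling each part of `λ`. -/
def double (l : Partn) : Partn where
  parts i := 2 * l.parts i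
  antitone' := by intro i j hij; exact Nat.mul_le_mul_left 2 (l.antitone' hij)
  bdd := ⟨Nat.find l.bdd, by simp [Nat.find_spec l.bdd]⟩

/-- The partition `1^k`. -/
def ones (k : ℕ) : Partn where
  parts i := if i < k then 1 else 0
  antitone' := by intro i j hij; (try dsimp only); split <;> split <;> omega
  bdd := ⟨k, by simp⟩

/-- Entrywise sum of partitions. -/
def add (p q : Partn) : Partn where
  parts i := p.parts i + q.parts i
  antitone' := fun _ _ h => Nat.add_le_add (p.antitone' h) (q.antitone' h)
  bdd := by
    refine ⟨Nat.find p.bdd + Nat.find q.bdd, ?_⟩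
    have h1 : p.parts (Nat.find p.bdd + Nat.find q.bdd) = 0 :=
      Nat.le_zero.mp (le_of_le_of_eq (p.antitone' (Nat.le_add_right _ _))
        (Nat.find_spec p.bdd))
    have h2 : q.parts (Nat.find p.bdd + Nat.find q.bdd) = 0 :=
      Nat.le_zero.mp (le_of_le_of_eq (q.antitone' (Nat.le_add_left _ _))
        (Nat.find_spec q.bdd))
    simp [h1, h2]

/-- The partition obtained by deleting the first column of the Young diagram. -/
def delFirstCol (p : Partn) : Partn where
  parts i := p.parts i - 1
  antitone' := fun _ _ h => Nat.sub_le_sub_right (p.antitone' h) 1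
  bdd := ⟨Nat.find p.bdd, by simp [Nat.find_spec p.bdd]⟩

end Partn

/-- The multiset `Λ(y, p)` of partitions of `⌈3m/2⌉`, `m = 2y + p`, recorded by its
multiplicity function: `LamMult y p μ` is the number of pairs `(η, π)` with `η` a
partition of `2y` with all parts even, `π` a sequence of `y+1` non-negative
integers summing to `p` satisfying the Pieri condition `π_{i+1} + η_{i+1} ≤ η_i`,
such that `μ = 1^{⌈m/2⌉} + η + π` (entrywise). -/
noncomputable def LamMult (y p : ℕ) (μ : Partn) : ℕ :=
  Set.ncard {x : Partn × (ℕ → ℕ) |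
    x.1.size = 2 * y ∧ (∀ i, 2 ∣ x.1.parts i) ∧
    (∀ i, y + 1 ≤ i → x.2 i = 0) ∧ (∑ i ∈ Finset.range (y + 1), x.2 i) = p ∧
    (∀ i, x.2 (i + 1) + x.1.parts (i + 1) ≤ x.1.parts i) ∧
    (∀ i, μ.parts i =
      (Partn.ones ((2 * y + p + 1) / 2)).parts i + x.1.parts i + x.2 i)}


/-!
Write `k = ⌈m/2⌉`. In a pair `(η, π)` counted by `Λ(y, p)`, `η` has at most `y` (even,
positive) parts and `π` vanishes from index `k` on, so `μ = 1^k + η + π` has exactly `k`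
parts and its first column deleted is `μ' = η + π`; the Pieri condition then says precisely
that `μ' / η` is a horizontal strip. Hence `τ ↦ (2τ, μ' − 2τ)` is a bijection from the
partitions `τ ⊢ y` with `μ' / 2τ` a horizontal strip onto these pairs.
-/

theorem Finset.sum_range_eq_of_eq_zero {M : Type*} [AddCommMonoid M] {f : ℕ → M} {m n : ℕ}
    (hm : ∀ i, m ≤ i → f i = 0) (hn : ∀ i, n ≤ i → f i = 0) :
    ∑ i ∈ Finset.range m, f i = ∑ i ∈ Finset.range n, f i := by
  rcases le_total m n with h | h
  · exact (Finset.eventually_constant_sum hm h).symm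
  · exact Finset.eventually_constant_sum hn h

namespace Partn

@[simp] theorem parts_double (p : Partn) (i : ℕ) : p.double.parts i = 2 * p.parts i := rfl

@[simp] theorem parts_ones (k i : ℕ) : (ones k).parts i = if i < k then 1 else 0 := rfl

@[simp] theorem parts_delFirstCol (p : Partn) (i : ℕ) :
    p.delFirstCol.parts i = p.parts i - 1 := rfl

theorem parts_numParts (p : Partn) : p.parts p.numParts = 0 := Nat.find_spec p.bdd

theorem parts_eq_zero_of_numParts_le (p : Partn) {i : ℕ} (h : p.numParts ≤ i) :
    p.parts i = 0 :=
  Nat.le_zero.mp ((p.antitone' h).trans_eq p.parts_numParts)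

theorem parts_ne_zero_of_lt_numParts (p : Partn) {i : ℕ} (h : i < p.numParts) :
    p.parts i ≠ 0 :=
  Nat.find_min p.bdd h

theorem numParts_le_of_parts_eq_zero (p : Partn) {i : ℕ} (h : p.parts i = 0) :
    p.numParts ≤ i :=
  Nat.find_min' p.bdd h

theorem numParts_eq_of_parts (p : Partn) {k : ℕ} (hk : p.parts k = 0)
    (hlt : ∀ i < k, p.parts i ≠ 0) : p.numParts = k :=
  le_antisymm (p.numParts_le_of_parts_eq_zero hk)
    (not_lt.1 fun h => hlt _ h p.parts_numParts)

theorem numParts_le_numParts {p q : Partn} (h : ∀ i, p.parts i ≤ q.parts i) :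
    p.numParts ≤ q.numParts :=
  p.numParts_le_of_parts_eq_zero (Nat.le_zero.mp ((h _).trans_eq q.parts_numParts))

theorem size_eq_sum_range (p : Partn) {N : ℕ} (h : p.numParts ≤ N) :
    p.size = ∑ i ∈ Finset.range N, p.parts i :=
  Finset.sum_range_eq_of_eq_zero (fun _ hi => p.parts_eq_zero_of_numParts_le hi)
    (fun _ hi => p.parts_eq_zero_of_numParts_le (h.trans hi))

theorem numParts_le_size (p : Partn) : p.numParts ≤ p.size :=
  calc p.numParts = ∑ _i ∈ Finset.range p.numParts, 1 := by simp
    _ ≤ p.size := Finset.sum_le_sum fun i hi =>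
      Nat.one_le_iff_ne_zero.2 (p.parts_ne_zero_of_lt_numParts (Finset.mem_range.1 hi))

def halve (p : Partn) : Partn where
  parts i := p.parts i / 2
  antitone' := fun _ _ h => Nat.div_le_div_right (p.antitone' h)
  bdd := ⟨p.numParts, by simp [p.parts_numParts]⟩

theorem double_halve {p : Partn} (h : ∀ i, 2 ∣ p.parts i) : p.halve.double = p :=
  ext' (funext fun i => Nat.mul_div_cancel' (h i))

theorem halve_double (p : Partn) : p.double.halve = p :=
  ext' (funext fun i => Nat.mul_div_cancel_left (p.parts i) two_pos)

theorem double_injective : Function.Injective double :=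
  Function.LeftInverse.injective halve_double

theorem numParts_double (p : Partn) : p.double.numParts = p.numParts :=
  p.double.numParts_eq_of_parts (by simp [p.parts_numParts])
    (fun _ hi => by simpa using p.parts_ne_zero_of_lt_numParts hi)

theorem size_double (p : Partn) : p.double.size = 2 * p.size := by
  simp only [size, numParts_double, parts_double, Finset.mul_sum]

theorem numParts_le_of_even {p : Partn} {y : ℕ} (hev : ∀ i, 2 ∣ p.parts i)
    (hsize : p.size = 2 * y) : p.numParts ≤ y := by
  rw [← double_halve hev, size_double] at hsize
  rw [← double_halve hev, numParts_double]
  have := p.halve.numParts_le_size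
  omega

theorem parts_eq_ones_add_delFirstCol (p : Partn) (i : ℕ) :
    p.parts i = (ones p.numParts).parts i + p.delFirstCol.parts i := by
  rcases lt_or_ge i p.numParts with hi | hi
  · have := p.parts_ne_zero_of_lt_numParts hi
    simp only [parts_ones, if_pos hi, parts_delFirstCol]
    omega
  · simp [if_neg (not_lt.2 hi), p.parts_eq_zero_of_numParts_le hi]

theorem numParts_delFirstCol_le (p : Partn) : p.delFirstCol.numParts ≤ p.numParts :=
  numParts_le_numParts fun _ => Nat.sub_le _ _

theorem size_eq_numParts_add_size_delFirstCol (p : Partn) :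
    p.size = p.numParts + p.delFirstCol.size := by
  have hones : ∑ i ∈ Finset.range p.numParts, (ones p.numParts).parts i = p.numParts := by
    rw [Finset.sum_congr rfl fun i hi =>
      show (ones p.numParts).parts i = 1 from if_pos (Finset.mem_range.1 hi)]
    simp
  rw [p.delFirstCol.size_eq_sum_range p.numParts_delFirstCol_le, size,
    Finset.sum_congr rfl fun i _ => p.parts_eq_ones_add_delFirstCol i,
    Finset.sum_add_distrib, hones]

theorem numParts_eq_of_parts_eq_ones_add {p : Partn} {k : ℕ} {ν : ℕ → ℕ}
    (h : ∀ i, p.parts i = (ones k).parts i + ν i) (hν : ∀ i, k ≤ i → ν i = 0) :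
    p.numParts = k :=
  p.numParts_eq_of_parts (by simp [h, hν]) fun i hi => by simp [h, hi]

theorem HStrip.numParts_le {η ν : Partn} (h : HStrip η ν) : ν.numParts ≤ η.numParts + 1 :=
  ν.numParts_le_of_parts_eq_zero (Nat.le_zero.mp ((h.2 _).trans_eq η.parts_numParts))

theorem sum_range_sub_eq_size_sub {η ν : Partn} (hle : ∀ i, η.parts i ≤ ν.parts i) {N : ℕ}
    (hN : ν.numParts ≤ N) :
    ∑ i ∈ Finset.range N, (ν.parts i - η.parts i) = ν.size - η.size := by
  have hsum : ∑ i ∈ Finset.range N, (ν.parts i - η.parts i) + η.size = ν.size := by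
    rw [η.size_eq_sum_range ((numParts_le_numParts hle).trans hN), ν.size_eq_sum_range hN,
      ← Finset.sum_add_distrib]
    exact Finset.sum_congr rfl fun i _ => Nat.sub_add_cancel (hle i)
  omega

end Partn

open Partn

structure IsLamPair (y p : ℕ) (μ η : Partn) (π : ℕ → ℕ) : Prop where
  size_eta : η.size = 2 * y
  even_eta : ∀ i, 2 ∣ η.parts i
  support_pi : ∀ i, y + 1 ≤ i → π i = 0
  sum_pi : ∑ i ∈ Finset.range (y + 1), π i = p
  pieri : ∀ i, π (i + 1) + η.parts (i + 1) ≤ η.parts i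
  parts_eq : ∀ i, μ.parts i = (ones ((2 * y + p + 1) / 2)).parts i + η.parts i + π i

theorem lamMult_eq_ncard (y p : ℕ) (μ : Partn) :
    LamMult y p μ = {x : Partn × (ℕ → ℕ) | IsLamPair y p μ x.1 x.2}.ncard := by
  unfold LamMult
  congr 1
  ext ⟨η, π⟩
  exact ⟨fun ⟨h₁, h₂, h₃, h₄, h₅, h₆⟩ => ⟨h₁, h₂, h₃, h₄, h₅, h₆⟩,
    fun ⟨h₁, h₂, h₃, h₄, h₅, h₆⟩ => ⟨h₁, h₂, h₃, h₄, h₅, h₆⟩⟩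

namespace IsLamPair

variable {y p : ℕ} {μ η : Partn} {π : ℕ → ℕ} (h : IsLamPair y p μ η π)
include h

theorem numParts_eta_le : η.numParts ≤ y := numParts_le_of_even h.even_eta h.size_eta

/-- For `p = 0` the support bound `y + 1` exceeds `⌈m/2⌉ = y`, but then `π = 0`. -/
theorem pi_eq_zero_of_le {i : ℕ} (hi : (2 * y + p + 1) / 2 ≤ i) : π i = 0 := by
  rcases le_or_gt (y + 1) i with hy | hy
  · exact h.support_pi i hy
  · have hp : p = 0 := by omega
    exact Finset.sum_eq_zero_iff.1 (h.sum_pi.trans hp) i (Finset.mem_range.2 hy)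

theorem numParts_eq : μ.numParts = (2 * y + p + 1) / 2 :=
  numParts_eq_of_parts_eq_ones_add (fun i => (h.parts_eq i).trans (add_assoc _ _ _))
    fun i hi => by
      rw [h.pi_eq_zero_of_le hi,
        η.parts_eq_zero_of_numParts_le (h.numParts_eta_le.trans (by omega))]

theorem parts_delFirstCol (i : ℕ) : μ.delFirstCol.parts i = η.parts i + π i := by
  rcases lt_or_ge i ((2 * y + p + 1) / 2) with hi | hi
  · have := h.parts_eq i
    simp only [parts_ones, if_pos hi] at this
    simp only [Partn.parts_delFirstCol]
    omega
  · rw [μ.delFirstCol.parts_eq_zero_of_numParts_le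
      (μ.numParts_delFirstCol_le.trans (h.numParts_eq.trans_le hi)), h.pi_eq_zero_of_le hi,
      η.parts_eq_zero_of_numParts_le (h.numParts_eta_le.trans (by omega))]

theorem size_eq : μ.size = (3 * (2 * y + p) + 1) / 2 := by
  set k := (2 * y + p + 1) / 2
  have hk : μ.delFirstCol.numParts ≤ k := μ.numParts_delFirstCol_le.trans_eq h.numParts_eq
  have hη : η.size = ∑ i ∈ Finset.range k, η.parts i :=
    η.size_eq_sum_range (h.numParts_eta_le.trans (by omega))
  have hπ : ∑ i ∈ Finset.range k, π i = p :=
    (Finset.sum_range_eq_of_eq_zero (fun _ => h.pi_eq_zero_of_le) h.support_pi).trans h.sum_pi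
  have hdel : μ.delFirstCol.size = 2 * y + p := by
    rw [μ.delFirstCol.size_eq_sum_range hk, Finset.sum_congr rfl fun i _ => h.parts_delFirstCol i,
      Finset.sum_add_distrib, ← hη, hπ, h.size_eta]
  rw [size_eq_numParts_add_size_delFirstCol, h.numParts_eq, hdel]
  omega

theorem hStrip : HStrip η μ.delFirstCol :=
  ⟨fun i => by rw [h.parts_delFirstCol]; omega,
    fun i => by rw [h.parts_delFirstCol]; exact (h.pieri i).trans_eq' (add_comm _ _)⟩

end IsLamPair

def pieriPair (ν τ : Partn) : Partn × (ℕ → ℕ) :=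
  (τ.double, fun i => ν.parts i - τ.double.parts i)

theorem pieriPair_injective (ν : Partn) : Function.Injective (pieriPair ν) :=
  fun _ _ h => double_injective (congrArg Prod.fst h)

theorem isLamPair_pieriPair {y p : ℕ} {μ τ : Partn}
    (hsize : μ.size = (3 * (2 * y + p) + 1) / 2) (hnum : μ.numParts = (2 * y + p + 1) / 2)
    (hτ : τ.size = y) (hstrip : HStrip τ.double μ.delFirstCol) :
    IsLamPair y p μ (pieriPair μ.delFirstCol τ).1 (pieriPair μ.delFirstCol τ).2 := by
  have hnumν : μ.delFirstCol.numParts ≤ y + 1 := by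
    have := hstrip.numParts_le
    rw [numParts_double] at this
    have := τ.numParts_le_size
    omega
  have hsizeν : μ.delFirstCol.size = 2 * y + p := by
    have := μ.size_eq_numParts_add_size_delFirstCol
    omega
  refine ⟨by rw [pieriPair, size_double, hτ], fun i => ⟨τ.parts i, rfl⟩, fun i hi => ?_, ?_,
    fun i => ?_, fun i => ?_⟩
  · simp only [pieriPair]
    rw [μ.delFirstCol.parts_eq_zero_of_numParts_le (hnumν.trans hi), Nat.zero_sub]
  · rw [pieriPair, sum_range_sub_eq_size_sub hstrip.1 hnumν, hsizeν, size_double, hτ]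
    omega
  · have := hstrip.1 (i + 1)
    have := hstrip.2 i
    simp only [pieriPair]
    omega
  · have := hstrip.1 i
    have := μ.parts_eq_ones_add_delFirstCol i
    rw [hnum] at this
    simp only [pieriPair]
    omega

theorem image_pieriPair {y p : ℕ} {μ : Partn}
    (hsize : μ.size = (3 * (2 * y + p) + 1) / 2) (hnum : μ.numParts = (2 * y + p + 1) / 2) :
    pieriPair μ.delFirstCol '' {τ : Partn | τ.size = y ∧ HStrip τ.double μ.delFirstCol} =
      {x : Partn × (ℕ → ℕ) | IsLamPair y p μ x.1 x.2} := by
  ext ⟨η, π⟩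
  constructor
  · rintro ⟨τ, ⟨hτ, hstrip⟩, hx⟩
    rw [← hx]
    exact isLamPair_pieriPair hsize hnum hτ hstrip
  · intro (h : IsLamPair y p μ η π)
    have hη : η.halve.double = η := double_halve h.even_eta
    refine ⟨η.halve, ⟨?_, by rw [hη]; exact h.hStrip⟩, ?_⟩
    · have := h.size_eta
      rw [← hη, size_double] at this
      omega
    · rw [pieriPair, hη]
      congr
      funext i
      rw [h.parts_delFirstCol]
      omega

/-- with `m = 2y + p`: (a) every element of the multiset `Λ(y, p)` has
exactly `⌈m/2⌉` parts (and is a partition of `⌈3m/2⌉`); (b) for a partition `μ` of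
`⌈3m/2⌉` with exactly `⌈m/2⌉` parts, the multiplicity of `μ` in `Λ(y, p)` equals the
Littlewood–Richardson (Pieri) multiplicity of `V_{μ'}` in
`Ind_{S_{2y} × S_p}^{S_m}((⊕_{τ ⊢ y} V_{2τ}) ⊠ triv)`, where `μ'` is obtained from
`μ` by deleting the first column: the number of partitions `τ` of `y` with `μ'/2τ` a
horizontal strip. -/
theorem lambda_multiset_littlewood_richardson (y p : ℕ) :
    (∀ μ : Partn, LamMult y p μ ≠ 0 →
      μ.numParts = (2 * y + p + 1) / 2 ∧ μ.size = (3 * (2 * y + p) + 1) / 2) ∧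
    (∀ μ : Partn, μ.size = (3 * (2 * y + p) + 1) / 2 →
      μ.numParts = (2 * y + p + 1) / 2 →
      LamMult y p μ =
        Set.ncard {τ : Partn | τ.size = y ∧ Partn.HStrip τ.double μ.delFirstCol}) := by
  refine ⟨fun μ hμ => ?_, fun μ hsize hnum => ?_⟩
  · rw [lamMult_eq_ncard] at hμ
    obtain ⟨_, h⟩ := Set.nonempty_of_ncard_ne_zero hμ
    exact ⟨h.numParts_eq, h.size_eq⟩
  · rw [lamMult_eq_ncard, ← image_pieriPair hsize hnum,
      Set.ncard_image_of_injective _ (pieriPair_injective _)]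
end

section
/- Let ξ be a core graph of genus 1 (i.e. the underlying graph is a tree) of type (1, n, r) with r > 0. Then ρ(A_ξ) ≤ n − r, where ρ(A_ξ) is the maximal number of rows of a Young diagram indexing an irreducible summand of the S_n-module A_ξ = Ind_{I_γ}^{S_n}(det(γ)_{Aut(γ)}) for any leg-labeling γ of ξ. Consequently n + ρ(A_ξ) ≤ 3(n − r). -/
namespace MGraph

variable (G : MGraph)

section Iso

variable {n : ℕ}

/-- A (label-preserving) isomorphism between two leg labelings of a marked graph,
given by compatible permutations of the vertices and the flags. -/
structure IsIso (lab lab' : Fin n ≃ {f : G.F // G.ι f = f})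
    (eV : Equiv.Perm G.V) (eF : Equiv.Perm G.F) : Prop where
  comm_a : ∀ f, G.a (eF f) = eV (G.a f)
  comm_ι : ∀ f, G.ι (eF f) = eF (G.ι f)
  fix_dv : eV G.dv = G.dv
  mem_marked : ∀ f, f ∈ G.marked ↔ eF f ∈ G.marked
  lab_eq : ∀ i : Fin n, eF (lab i : G.F) = (lab' i : G.F)

/-- The marked graph `σγ`: the leg labeled `i` in `γ` is labeled `σ i` in `σγ`. -/
def relabel (σ : Equiv.Perm (Fin n)) (lab : Fin n ≃ {f : G.F // G.ι f = f}) :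
    Fin n ≃ {f : G.F // G.ι f = f} :=
  σ.symm.trans lab

/-- The set `I_γ ⊆ Sₙ` of permutations `σ` with `σγ ≅ γ` by a label-preserving
isomorphism. -/
def ISet (lab : Fin n ≃ {f : G.F // G.ι f = f}) : Set (Equiv.Perm (Fin n)) :=
  {σ | ∃ eV eF, G.IsIso (G.relabel σ lab) lab eV eF}

end Iso

section Det

/-- The non-leg flags. -/
abbrev NonLegs : Type := {f : G.F // G.ι f ≠ f}

/-- The relation identifying the two flags of an edge. -/
def edgeRel (f g : G.NonLegs) : Prop := (g : G.F) = f ∨ (g : G.F) = G.ι f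

instance : DecidableRel G.edgeRel := by
  unfold edgeRel; infer_instance

/-- The setoid on non-leg flags whose classes are the edges. -/
def edgeSetoid : Setoid G.NonLegs where
  r := G.edgeRel
  iseqv := by
    constructor
    · intro f; exact Or.inl rfl
    · intro f g h
      rcases h with h | h
      · exact Or.inl h.symm
      · refine Or.inr ?_
        rw [h, G.ι_invol]
    · intro f g k hfg hgk
      rcases hfg with h1 | h1 <;> rcases hgk with h2 | h2
      · exact Or.inl (h2.trans h1)
      · exact Or.inr (by rw [h2, h1])
      · exact Or.inr (h2.trans h1)
      · exact Or.inl (by rw [h2, h1, G.ι_invol])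

/-- The set of edges of the graph. -/
abbrev Edge : Type := Quotient G.edgeSetoid

noncomputable instance : DecidableEq G.Edge := Classical.decEq _

noncomputable instance : Fintype G.Edge := Fintype.ofFinite _

variable {G}

/-- A structure-preserving flag permutation induces a permutation of the non-leg
flags. -/
def nonLegEquiv (eF : Equiv.Perm G.F) (hι : ∀ f, G.ι (eF f) = eF (G.ι f)) :
    G.NonLegs ≃ G.NonLegs :=
  Equiv.subtypeEquiv eF (by
    intro f
    constructor
    · intro h hc
      rw [hι] at hc
      exact h (eF.injective hc)
    · intro h hc
      exact h (by rw [hι, hc]))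

/-- The induced permutation of the edges. -/
def edgePerm (eF : Equiv.Perm G.F) (hι : ∀ f, G.ι (eF f) = eF (G.ι f)) :
    Equiv.Perm G.Edge :=
  Quotient.congr (nonLegEquiv eF hι) (by
    intro a b
    unfold edgeSetoid edgeRel
    show _ ↔ ((_ : G.F) = _ ∨ _)
    constructor
    · intro h
      rcases h with h | h
      · exact Or.inl (congrArg eF h)
      · refine Or.inr ?_
        show eF (b : G.F) = G.ι (eF (a : G.F))
        rw [hι, h]
    · intro h
      rcases h with h | h
      · exact Or.inl (eF.injective h)
      · refine Or.inr ?_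
        have : eF (b : G.F) = eF (G.ι (a : G.F)) := by rw [← hι]; exact h
        exact eF.injective this)

/-- The induced permutation of the marked flags. -/
def markedPerm (eF : Equiv.Perm G.F)
    (hm : ∀ f, f ∈ G.marked ↔ eF f ∈ G.marked) :
    Equiv.Perm {f : G.F // f ∈ G.marked} :=
  Equiv.subtypeEquiv eF hm

/-- The character by which a structure-preserving flag permutation acts on
`det(γ) = det(E) ⊗ det⁻¹(D)`: the product of the signs of the induced permutations
of the edges and of the marked flags. -/
noncomputable def chi (eF : Equiv.Perm G.F)
    (hι : ∀ f, G.ι (eF f) = eF (G.ι f))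
    (hm : ∀ f, f ∈ G.marked ↔ eF f ∈ G.marked) : ℤˣ :=
  Equiv.Perm.sign (edgePerm eF hι) * Equiv.Perm.sign (markedPerm eF hm)

variable (G)

/-- The submodule of `det(γ) ≅ ℚ` spanned by the elements `x − φ·x` for
automorphisms `φ` of the labeled marked graph. -/
noncomputable def coinvKer {n : ℕ} (lab : Fin n ≃ {f : G.F // G.ι f = f}) :
    Submodule ℚ ℚ :=
  Submodule.span ℚ {y : ℚ | ∃ (eV : Equiv.Perm G.V) (eF : Equiv.Perm G.F)
    (h : G.IsIso lab lab eV eF) (x : ℚ),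
    y = x - ((chi eF h.comm_ι h.mem_marked : ℤ) : ℚ) * x}

/-- The coinvariant space `det(γ)_{Aut(γ)}` (with `det(γ)` trivialized to `ℚ`). -/
noncomputable abbrev detCoinv {n : ℕ} (lab : Fin n ≃ {f : G.F // G.ι f = f}) : Type :=
  ℚ ⧸ G.coinvKer lab

/-- The projection `det(γ) → det(γ)_{Aut(γ)}`. -/
noncomputable def detCoinvMk {n : ℕ} (lab : Fin n ≃ {f : G.F // G.ι f = f}) :
    ℚ →ₗ[ℚ] G.detCoinv lab :=
  (G.coinvKer lab).mkQ

/-- The pinning property of the canonical `I_γ`-action on `det(γ)_{Aut(γ)}`: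
`σ ∈ I_γ` acts by first identifying `det(γ) = det(σγ)` and then applying (the
determinant character of) any label-preserving isomorphism `σγ → γ`, passed to
`Aut(γ)`-coinvariants. -/
def CanonicalCoinvRep {n : ℕ} (lab : Fin n ≃ {f : G.F // G.ι f = f})
    (H : Subgroup (Equiv.Perm (Fin n)))
    (θ : Representation ℚ H (G.detCoinv lab)) : Prop :=
  ∀ (σ : Equiv.Perm (Fin n)) (hσ : σ ∈ H)
    (eV : Equiv.Perm G.V) (eF : Equiv.Perm G.F)
    (h : G.IsIso (G.relabel σ lab) lab eV eF) (x : ℚ),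
    θ ⟨σ, hσ⟩ (G.detCoinvMk lab x) =
      G.detCoinvMk lab (((chi eF h.comm_ι h.mem_marked : ℤ) : ℚ) * x)

end Det

end MGraph

/-- `ρ(W)` for a representation `W` of `Sₙ`: the maximal `k` such that the
restriction of `W` to `S_k` contains the sign representation; equivalently, the
maximal number of rows of a Young diagram indexing an irreducible summand of
`W`. -/
noncomputable def rhoRep {n : ℕ} {V : Type} [AddCommGroup V] [Module ℚ V]
    (ρ : Representation ℚ (Equiv.Perm (Fin n)) V) : ℕ :=
  sSup {k | ∃ h : k ≤ n, ∃ v : V, v ≠ 0 ∧ ∀ σ : Equiv.Perm (Fin k),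
    ρ (Equiv.Perm.viaEmbeddingHom (Fin.castLEEmb h) σ) v =
      ((Equiv.Perm.sign σ : ℤ) : ℚ) • v}

section Induced

variable {G : Type} [Group G]

/-- The induced representation `Ind_H^G(V)`, modelled as the space of functions
`f : G → V` with `f (h * g) = ρ h (f g)` for `h ∈ H`, with `G` acting by right
translation.  For finite groups this is the usual induced representation. -/
def indCarrier (H : Subgroup G) {V : Type} [AddCommGroup V] [Module ℚ V]
    (ρ : Representation ℚ H V) : Submodule ℚ (G → V) where
  carrier := {f | ∀ (h : H) (g : G), f ((h : G) * g) = ρ h (f g)}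
  add_mem' := by intro x y hx hy h g; simp [hx h g, hy h g]
  zero_mem' := by intro h g; simp
  smul_mem' := by intro c x hx h g; simp [hx h g]

/-- The `G`-action on the induced representation, by right translation. -/
def indRep (H : Subgroup G) {V : Type} [AddCommGroup V] [Module ℚ V]
    (ρ : Representation ℚ H V) : Representation ℚ G (indCarrier H ρ) where
  toFun σ :=
    { toFun := fun f => ⟨fun g => (f : G → V) (g * σ), by
        intro h g
        have := f.2 h (g * σ)
        simpa [mul_assoc] using this⟩
      map_add' := by intro f₁ f₂; ext g; simp
      map_smul' := by intro c f; ext g; simp }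
  map_one' := by ext f g; simp
  map_mul' := by intro σ τ; ext f g; simp [mul_assoc]

/-- Equivariance of a linear map with respect to two representations of `G`. -/
def IsEquivariant {V W : Type} [AddCommGroup V] [Module ℚ V]
    [AddCommGroup W] [Module ℚ W]
    (ρ : Representation ℚ G V) (τ : Representation ℚ G W) (f : V →ₗ[ℚ] W) : Prop :=
  ∀ (g : G) (v : V), f (ρ g v) = τ g (f v)

end Induced

set_option maxHeartbeats 1000000

open MGraph

/-! The marked flags lie on distinct edges at the distinguished vertex, so in a tree the
count `∑ deg_E v = 2 (|V| - 1)` leaves at least `r` non-distinguished vertices of edge-degree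
one, and by stability each of them carries two legs. Swapping two legs at the same vertex is
an automorphism that fixes every edge and every marked flag, so the `r` disjoint transpositions
of their labels lie in `I_γ` and act trivially on `det(γ)_{Aut(γ)}`. If `S_k` acts by the sign
on a nonzero `f` in the induced module and `k > n - r`, then for each `g` pigeonhole puts some
pair `g⁻¹{Pᵢ, Qᵢ}` inside the first `k` labels, and with `τ = (Pᵢ Qᵢ)` we get
`f g = f (τ g) = f (g · g⁻¹ τ g) = - f g`. The second inequality is the first plus `2 r ≤ n`. -/

open Finset

theorem Function.Involutive.even_card_of_ne {α : Type*} [Fintype α] {f : α → α}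
    (hf : Function.Involutive f) (hne : ∀ x, f x ≠ x) : Even (Fintype.card α) := by
  classical
  let F : Function.End α := f
  have hsq : F ^ 2 ^ 1 = 1 := funext hf
  have hmod := Equiv.Perm.card_fixedPoints_modEq hsq
  have hfix : Fintype.card (Function.fixedPoints F) = 0 :=
    Fintype.card_eq_zero_iff.mpr ⟨fun x => hne x x.2⟩
  rw [hfix] at hmod
  exact Nat.even_iff.mpr hmod

theorem Finset.le_card_filter_eq_one {α : Type*} (s : Finset α) (d : α → ℕ) {r : ℕ}
    (hpos : ∀ x ∈ s, 0 < d x) (hsum : ∑ x ∈ s, d x + r ≤ 2 * #s) :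
    r ≤ #{x ∈ s | d x = 1} := by
  have hlow : ∑ x ∈ s, (if d x = 1 then 1 else 2) ≤ ∑ x ∈ s, d x :=
    Finset.sum_le_sum fun x hx => by have := hpos x hx; split_ifs <;> omega
  rw [Finset.sum_ite, Finset.sum_const, Finset.sum_const, smul_eq_mul, smul_eq_mul,
    mul_one] at hlow
  have hsplit := Finset.card_filter_add_card_filter_not (s := s) (fun x => d x = 1)
  omega

theorem exists_pair_mem_range {ι α β : Type*} [Fintype ι] [Fintype α] [Fintype β]
    {P Q : ι → α} (hPQ : Function.Injective (Sum.elim P Q)) (e : β ↪ α)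
    (hcard : Fintype.card α < Fintype.card β + Fintype.card ι) :
    ∃ i u w, e u = P i ∧ e w = Q i := by
  classical
  by_contra! hout
  have hchoice : ∀ i, ∃ s : ι ⊕ ι, Sum.elim id id s = i ∧ Sum.elim P Q s ∉ Set.range e := by
    intro i
    by_cases hP : P i ∈ Set.range e
    · obtain ⟨u, hu⟩ := hP
      exact ⟨.inr i, rfl, fun ⟨w, hw⟩ => hout i u w hu hw⟩
    · exact ⟨.inl i, rfl, hP⟩
  choose s hs hs' using hchoice
  have hinj : Function.Injective fun i => (⟨Sum.elim P Q (s i), hs' i⟩ : ↥(Set.range e)ᶜ) :=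
    fun i j h => by rw [← hs i, ← hs j, hPQ (congrArg Subtype.val h)]
  have hle := Fintype.card_le_of_injective _ hinj
  rw [Fintype.card_compl_set, Set.card_range_of_injective e.injective] at hle
  have := Fintype.card_le_of_embedding e
  omega

theorem Equiv.Perm.viaEmbeddingHom_swap {α β : Type*} [DecidableEq α] [DecidableEq β]
    (e : α ↪ β) (x y : α) :
    viaEmbeddingHom e (swap x y) = swap (e x) (e y) := by
  ext z
  rw [viaEmbeddingHom_apply]
  by_cases hz : z ∈ Set.range e
  · obtain ⟨w, rfl⟩ := hz
    rw [viaEmbedding_apply, e.injective.swap_apply]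
  · rw [viaEmbedding_apply_of_notMem _ _ z hz,
      swap_apply_of_ne_of_ne (fun h => hz ⟨x, h.symm⟩) (fun h => hz ⟨y, h.symm⟩)]

section Induced

variable {G : Type} [Group G] {H : Subgroup G} {V : Type} [AddCommGroup V] [Module ℚ V]
  {θ : Representation ℚ H V}

theorem indCarrier_apply_eq_zero_of_conj_neg (f : indCarrier H θ) {h : H} (hh : θ h = 1)
    {g : G} (hf : indRep H θ (g⁻¹ * h * g) f = -f) : (f : G → V) g = 0 := by
  have key : (f : G → V) g = -(f : G → V) g := calc
    (f : G → V) g = θ h ((f : G → V) g) := by rw [hh]; rfl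
    _ = (f : G → V) (h * g) := (f.2 h g).symm
    _ = (indRep H θ (g⁻¹ * h * g) f : G → V) g := by simp [indRep, mul_assoc]
    _ = -(f : G → V) g := by rw [hf]; rfl
  have := IsAddTorsionFree.of_module_rat V
  exact self_eq_neg.mp key

end Induced

theorem rhoRep_indRep_le_sub {n r : ℕ} {V : Type} [AddCommGroup V] [Module ℚ V]
    {H : Subgroup (Equiv.Perm (Fin n))} {θ : Representation ℚ H V} {P Q : Fin r → Fin n}
    (hPQ : Function.Injective (Sum.elim P Q))
    (hswap : ∀ i, ∃ h : Equiv.swap (P i) (Q i) ∈ H, θ ⟨_, h⟩ = 1) :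
    rhoRep (indRep H θ) ≤ n - r := by
  refine csSup_le' ?_
  rintro k ⟨hk, v, hv, hsign⟩
  suffices k + r ≤ n by omega
  by_contra! hlt
  refine hv (Subtype.ext (funext fun g => ?_))
  have hPQg : Function.Injective (Sum.elim (⇑g⁻¹ ∘ P) (⇑g⁻¹ ∘ Q)) := by
    rw [← Sum.comp_elim]
    exact g⁻¹.injective.comp hPQ
  obtain ⟨i, u, w, hu, hw⟩ :=
    exists_pair_mem_range hPQg (Fin.castLEEmb hk) (by simpa using hlt)
  obtain ⟨hmem, hθi⟩ := hswap i
  have huw : u ≠ w := fun h => hPQg.ne (Sum.inl_ne_inr (a := i) (b := i))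
    (by rw [Sum.elim_inl, Sum.elim_inr, ← hu, ← hw, h])
  have hconj : Equiv.Perm.viaEmbeddingHom (Fin.castLEEmb hk) (Equiv.swap u w) =
      g⁻¹ * Equiv.swap (P i) (Q i) * g := by
    rw [Equiv.Perm.viaEmbeddingHom_swap, hu, hw]
    simpa using Equiv.swap_apply_apply g⁻¹ (P i) (Q i)
  refine indCarrier_apply_eq_zero_of_conj_neg v hθi ?_
  rw [← hconj, hsign, Equiv.Perm.sign_swap huw]
  simp

namespace MGraph

variable (G : MGraph)

def edgeDegree (v : G.V) : ℕ := #{f | G.a f = v ∧ G.ι f ≠ f}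

theorem card_nonLegs_eq_two_mul_numEdges : Fintype.card G.NonLegs = 2 * G.numEdges := by
  have heven : Even (Fintype.card {f : G.F // G.ι f ≠ f}) :=
    Function.Involutive.even_card_of_ne
      (f := fun x : G.NonLegs => ⟨G.ι x, fun h => x.2 (by rw [G.ι_invol] at h; exact h.symm)⟩)
      (fun x => Subtype.ext (G.ι_invol x)) (fun x h => x.2 (congrArg Subtype.val h))
  obtain ⟨t, ht⟩ := heven
  rw [numEdges, ht]
  omega

theorem sum_edgeDegree : ∑ v, G.edgeDegree v = Fintype.card G.NonLegs := by
  rw [Fintype.card_subtype,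
    Finset.card_eq_sum_card_fiberwise (f := G.a) (t := univ) fun _ _ => mem_univ _]
  simp only [edgeDegree, Finset.filter_filter, and_comm]

variable {G}

theorem edgeDegree_pos (hconn : G.Connected) {v : G.V} (hv : v ≠ G.dv) :
    0 < G.edgeDegree v := by
  rcases (hconn v G.dv).cases_head with h | ⟨_, ⟨f, hf, hfv, -⟩, -⟩
  · exact absurd h hv
  · exact Finset.card_pos.mpr ⟨f, by simp [hf, hfv]⟩

theorem card_marked_le_edgeDegree_dv (hcore : G.NoMarkedLegs) :
    #G.marked ≤ G.edgeDegree G.dv :=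
  Finset.card_le_card fun f hf => by simp [hcore f hf, G.marked_adj f hf]

theorem one_lt_card_legs_of_edgeDegree_eq_one (hadm : G.Admissible) {v : G.V}
    (hv : v ≠ G.dv) (hdeg : G.edgeDegree v = 1) : 1 < #{f | G.a f = v ∧ G.ι f = f} := by
  have hval := hadm.1 v hv
  rw [Fintype.card_subtype] at hval
  have hsplit :=
    Finset.card_filter_add_card_filter_not (s := {f | G.a f = v}) fun f => G.ι f = f
  simp only [Finset.filter_filter] at hsplit
  simp only [edgeDegree, ne_eq] at hdeg
  omega

theorem card_marked_le_card_leaves (hconn : G.Connected) (hcore : G.NoMarkedLegs)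
    (htree : G.numEdges + 1 = Fintype.card G.V) :
    #G.marked ≤ #{v ∈ univ.erase G.dv | G.edgeDegree v = 1} := by
  refine Finset.le_card_filter_eq_one _ _
    (fun v hv => edgeDegree_pos hconn (ne_of_mem_erase hv)) ?_
  have hsum := Finset.add_sum_erase univ G.edgeDegree (mem_univ G.dv)
  rw [sum_edgeDegree, card_nonLegs_eq_two_mul_numEdges] at hsum
  have hcard : #(univ.erase G.dv) = Fintype.card G.V - 1 := by
    rw [card_erase_of_mem (mem_univ _), card_univ]
  have := card_marked_le_edgeDegree_dv hcore
  omega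

theorem exists_leg_pairs (hconn : G.Connected) (hadm : G.Admissible) (hcore : G.NoMarkedLegs)
    (htree : G.numEdges + 1 = Fintype.card G.V) :
    ∃ A B : Fin #G.marked → {f : G.F // G.ι f = f},
      Function.Injective (Sum.elim A B) ∧ ∀ i, G.a (A i) = G.a (B i) := by
  set L := {v ∈ univ.erase G.dv | G.edgeDegree v = 1}
  obtain ⟨φ⟩ : Nonempty (Fin #G.marked ↪ L) := Function.Embedding.nonempty_of_card_le
    (by simpa using card_marked_le_card_leaves hconn hcore htree)
  have hlegs : ∀ v ∈ L, ∃ x y : {f : G.F // G.ι f = f}, x ≠ y ∧ G.a x = v ∧ G.a y = v := by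
    intro v hv
    simp only [L, mem_filter, mem_erase] at hv
    obtain ⟨x, hx, y, hy, hxy⟩ :=
      Finset.one_lt_card.mp (one_lt_card_legs_of_edgeDegree_eq_one hadm hv.1.1 hv.2)
    simp only [mem_filter, mem_univ, true_and] at hx hy
    exact ⟨⟨x, hx.2⟩, ⟨y, hy.2⟩, fun h => hxy (congrArg Subtype.val h), hx.1, hy.1⟩
  choose A B hAB hA hB using fun i => hlegs (φ i) (φ i).2
  have hφ : ∀ {i j}, (φ i : G.V) = φ j → i = j := fun h => φ.injective (Subtype.ext h)
  refine ⟨A, B, ?_, fun i => (hA i).trans (hB i).symm⟩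
  refine Function.Injective.sumElim (fun i j h => hφ ?_) (fun i j h => hφ ?_) fun i j h => ?_
  · rw [← hA, ← hA, h]
  · rw [← hB, ← hB, h]
  · have hij : i = j := hφ (by rw [← hA i, ← hB j, h])
    subst hij
    exact hAB i h

variable {n : ℕ}

theorem isIso_swap_legs (hcore : G.NoMarkedLegs) (lab : Fin n ≃ {f : G.F // G.ι f = f})
    {i j : Fin n} (hij : G.a (lab i) = G.a (lab j)) :
    G.IsIso (G.relabel (Equiv.swap i j) lab) lab 1 (Equiv.swap (lab i) (lab j)) where
  comm_a f := by
    simp only [Equiv.swap_apply_def, Equiv.Perm.one_apply]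
    split_ifs <;> simp_all
  comm_ι f := by
    have := (Function.Involutive.injective G.ι_invol).swap_apply (lab i : G.F) (lab j) f
    rwa [(lab i).2, (lab j).2, eq_comm] at this
  fix_dv := rfl
  mem_marked f := by
    have hi : (lab i : G.F) ∉ G.marked := fun h => hcore _ h (lab i).2
    have hj : (lab j : G.F) ∉ G.marked := fun h => hcore _ h (lab j).2
    simp only [Equiv.swap_apply_def]
    split_ifs <;> simp_all
  lab_eq k := by
    simpa [relabel] using
      (Subtype.val_injective.comp lab.injective).swap_apply i j (Equiv.swap i j k)

theorem chi_eq_one_of_forall_nonLeg_fixed (hcore : G.NoMarkedLegs) {eF : Equiv.Perm G.F}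
    (hι : ∀ f, G.ι (eF f) = eF (G.ι f)) (hm : ∀ f, f ∈ G.marked ↔ eF f ∈ G.marked)
    (hfix : ∀ f, G.ι f ≠ f → eF f = f) : chi eF hι hm = 1 := by
  have hE : edgePerm eF hι = 1 := Equiv.ext fun q => q.inductionOn fun x =>
    congrArg (Quotient.mk _) (Subtype.ext (hfix x x.2))
  have hM : markedPerm eF hm = 1 := Equiv.ext fun x => Subtype.ext (hfix x (hcore x x.2))
  rw [chi, hE, hM, map_one, map_one, mul_one]

theorem canonicalCoinvRep_swap_legs_eq_one (hcore : G.NoMarkedLegs)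
    {lab : Fin n ≃ {f : G.F // G.ι f = f}} {H : Subgroup (Equiv.Perm (Fin n))}
    (hH : (H : Set (Equiv.Perm (Fin n))) = G.ISet lab) {θ : Representation ℚ H (G.detCoinv lab)}
    (hθ : G.CanonicalCoinvRep lab H θ) {i j : Fin n} (hij : G.a (lab i) = G.a (lab j)) :
    ∃ h : Equiv.swap i j ∈ H, θ ⟨Equiv.swap i j, h⟩ = 1 := by
  have iso := isIso_swap_legs hcore lab hij
  have hmem : Equiv.swap i j ∈ H := by
    rw [← SetLike.mem_coe, hH]
    exact ⟨1, _, iso⟩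
  have hchi : chi _ iso.comm_ι iso.mem_marked = 1 :=
    chi_eq_one_of_forall_nonLeg_fixed hcore _ _ fun f hf =>
      Equiv.swap_apply_of_ne_of_ne (fun h => hf (h ▸ (lab i).2)) (fun h => hf (h ▸ (lab j).2))
  refine ⟨hmem, LinearMap.ext fun w => ?_⟩
  obtain ⟨x, rfl⟩ := (G.coinvKer lab).mkQ_surjective w
  have := hθ _ hmem _ _ iso x
  rw [hchi, Units.val_one, Int.cast_one, one_mul] at this
  exact this

end MGraph

theorem genus_one_core_graph_row_bound_general (G : MGraph) (n r : ℕ)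
    (lab : Fin n ≃ {f : G.F // G.ι f = f})
    (hconn : G.Connected) (hadm : G.Admissible) (hcore : G.NoMarkedLegs)
    (htype : G.IsType 1 n r)
    (H : Subgroup (Equiv.Perm (Fin n))) (hH : (H : Set (Equiv.Perm (Fin n))) = G.ISet lab)
    (θ : Representation ℚ H (G.detCoinv lab))
    (hθ : G.CanonicalCoinvRep lab H θ) :
    (rhoRep (indRep H θ) : ℤ) ≤ (n : ℤ) - (r : ℤ) ∧
    (n : ℤ) + (rhoRep (indRep H θ) : ℤ) ≤ 3 * ((n : ℤ) - (r : ℤ)) := by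
  obtain ⟨hgenus, -, rfl⟩ := htype
  obtain ⟨A, B, hAB, hadj⟩ := G.exists_leg_pairs hconn hadm hcore (by omega)
  have hPQ : Function.Injective (Sum.elim (lab.symm ∘ A) (lab.symm ∘ B)) := by
    rw [← Sum.comp_elim]
    exact lab.symm.injective.comp hAB
  have h2r : 2 * #G.marked ≤ n := by
    simpa [two_mul] using Fintype.card_le_of_injective _ hPQ
  have hrho : rhoRep (indRep H θ) ≤ n - #G.marked :=
    rhoRep_indRep_le_sub hPQ fun i =>
      canonicalCoinvRep_swap_legs_eq_one hcore hH hθ (by simpa using hadj i)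
  omega

/-- let `ξ` be a genus-1 core graph (a tree) of type `(1, n, r)` with
`r > 0`, with a leg labeling `lab`.  Let `A_ξ = Ind_{I_γ}^{S_n}(det(γ)_{Aut(γ)})`,
where `I_γ` is the subgroup of `Sₙ` of permutations `σ` with `σγ ≅ γ` and the
action on the coinvariants is the canonical one.  Then `ρ(A_ξ) ≤ n − r`, and
consequently `n + ρ(A_ξ) ≤ 3(n − r)`. -/
theorem genus_one_core_graph_row_bound (G : MGraph) (n r : ℕ) (hr : 0 < r)
    (lab : Fin n ≃ {f : G.F // G.ι f = f})
    (hconn : G.Connected) (hadm : G.Admissible) (hcore : G.NoMarkedLegs)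
    (htype : G.IsType 1 n r)
    (H : Subgroup (Equiv.Perm (Fin n))) (hH : (H : Set (Equiv.Perm (Fin n))) = G.ISet lab)
    (θ : Representation ℚ H (G.detCoinv lab))
    (hθ : G.CanonicalCoinvRep lab H θ) :
    (rhoRep (indRep H θ) : ℤ) ≤ (n : ℤ) - (r : ℤ) ∧
    (n : ℤ) + (rhoRep (indRep H θ) : ℤ) ≤ 3 * ((n : ℤ) - (r : ℤ)) :=
  genus_one_core_graph_row_bound_general G n r lab hconn hadm hcore htype H hH θ hθ
end

section
/- Fix g ≥ 1 and ℓ with m := 3(g−1) + 2ℓ ≥ 0. For every core graph ξ of type (g, n, r) with n − r ≤ ℓ, one has n + ρ(A_ξ) ≤ ⌈9(g−1)/2⌉ + 3(n−r) ≤ ⌈3m/2⌉, where ρ(A_ξ) is the maximal number of rows of a Young diagram appearing in the irreducible decomposition of the S_n-module A_ξ = Ind_{I_γ}^{S_n}(det(γ)_{Aut(γ)}). -/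
set_option maxHeartbeats 1000000

open MGraph

/-!
Let `v ∈ A_ξ` be nonzero with `S_k` acting on it by the sign, and pick `p` with `v p ≠ 0`. If the
transposition of the labels `p a`, `p b` (`a ≠ b < k`) is realised by an automorphism of `γ` with
trivial determinant character, then `v p = v (p (a b)) = -v p`, which is impossible. Such
automorphisms exchange two legs at one vertex, and also the legs of two marked digons (neutral
vertices carrying one leg and joined to `dv` by two edges marked there): exchanging two marked edges
changes the sign once on the edges and once on the marked flags. So the `k` legs sit at distinct
vertices, at most one of them a marked digon.

Discharging then bounds `k`: the weight of a vertex `w` is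
`12 (marked flags towards w) + 4 [w carries one of the k legs] - 9 (half-edges at dv towards w)
- 8 (legs at w)`, plus `18 - 9 (half-edges at w)` when `w ≠ dv`. The weights sum to
`12 r + 4 k - 8 n - 18 (g - 1)`, and each is `≤ 0`, except at a marked digon where it is `≤ 2`.
Hence `12 r + 4 k ≤ 18 (g - 1) + 8 n + 2`, i.e. `k ≤ ⌈9 (g - 1) / 2⌉ + 2 n - 3 r`.
-/

theorem Equiv.Perm.viaEmbedding_swap {α β : Type*} [DecidableEq α] [DecidableEq β]
    (ι : α ↪ β) (a b : α) :
    (Equiv.swap a b).viaEmbedding ι = Equiv.swap (ι a) (ι b) := by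
  ext x
  by_cases hx : x ∈ Set.range ι
  · obtain ⟨c, rfl⟩ := hx
    rw [Equiv.Perm.viaEmbedding_apply, ι.injective.swap_apply]
  · rw [Equiv.Perm.viaEmbedding_apply_of_notMem _ _ x hx,
      Equiv.swap_apply_of_ne_of_ne (fun h => hx ⟨a, h.symm⟩) (fun h => hx ⟨b, h.symm⟩)]

theorem Finset.sum_le_of_subsingleton_pos {ι : Type*} {s : Finset ι} {f : ι → ℤ} {c : ℤ}
    (hc : 0 ≤ c) (hle : ∀ i ∈ s, f i ≤ c) (hpos : ∀ i ∈ s, ∀ j ∈ s, 0 < f i → 0 < f j → i = j) :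
    ∑ i ∈ s, f i ≤ c := by
  classical
  by_cases h : ∃ i ∈ s, 0 < f i
  · obtain ⟨i, hi, hfi⟩ := h
    have hrest : ∑ j ∈ s.erase i, f j ≤ 0 := Finset.sum_nonpos fun j hj => by
      by_contra! hfj
      exact (Finset.mem_erase.mp hj).1 (hpos j (Finset.mem_of_mem_erase hj) i hi hfj hfi)
    rw [← Finset.add_sum_erase s f hi]
    linarith [hle i hi]
  · push Not at h
    exact (Finset.sum_nonpos h).trans hc

theorem rhoRep_eq_zero_or {n : ℕ} {V : Type} [AddCommGroup V] [Module ℚ V]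
    (ρ : Representation ℚ (Equiv.Perm (Fin n)) V) :
    rhoRep ρ = 0 ∨ ∃ h : rhoRep ρ ≤ n, ∃ v : V, v ≠ 0 ∧ ∀ σ : Equiv.Perm (Fin (rhoRep ρ)),
      ρ (Equiv.Perm.viaEmbeddingHom (Fin.castLEEmb h) σ) v = ((Equiv.Perm.sign σ : ℤ) : ℚ) • v := by
  unfold rhoRep
  set S := {k | ∃ h : k ≤ n, ∃ v : V, v ≠ 0 ∧ ∀ σ : Equiv.Perm (Fin k),
    ρ (Equiv.Perm.viaEmbeddingHom (Fin.castLEEmb h) σ) v = ((Equiv.Perm.sign σ : ℤ) : ℚ) • v}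
  rcases S.eq_empty_or_nonempty with hS | hS
  · left
    rw [hS, csSup_empty]
    rfl
  · exact Or.inr (Nat.sSup_mem hS ⟨n, fun k hk => hk.1⟩)

theorem indCarrier_apply_eq_zero {G : Type} [Group G] {H : Subgroup G} {V : Type}
    [AddCommGroup V] [Module ℚ V] {θ : Representation ℚ H V} (v : indCarrier H θ) (p : G) (t : H)
    (ht : ∀ x, θ t x = x) (hv : indRep H θ (p⁻¹ * t * p) v = -v) :
    (v : G → V) p = 0 := by
  have h_triv : (v : G → V) (p * (p⁻¹ * t * p)) = (v : G → V) p := by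
    rw [show p * (p⁻¹ * t * p) = t * p by group, v.2 t p, ht]
  have h_neg : (v : G → V) (p * (p⁻¹ * t * p)) = -(v : G → V) p :=
    congrFun (congrArg Subtype.val hv) p
  have : IsAddTorsionFree V := .of_module_rat V
  exact self_eq_neg.mp (h_triv.symm.trans h_neg)

namespace MGraph

variable {G : MGraph}

theorem ι_injective : Function.Injective G.ι :=
  Function.Involutive.injective G.ι_invol

section FlagPermutations

theorem edgePerm_mk (eF : Equiv.Perm G.F) (hι : ∀ f, G.ι (eF f) = eF (G.ι f))
    (x : G.NonLegs) :
    edgePerm eF hι ⟦x⟧ = ⟦⟨eF x, (nonLegEquiv eF hι x).2⟩⟧ :=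
  rfl

theorem edgePerm_mul (e₁ e₂ : Equiv.Perm G.F) (hι : ∀ f, G.ι ((e₁ * e₂) f) = (e₁ * e₂) (G.ι f))
    (hι₁ : ∀ f, G.ι (e₁ f) = e₁ (G.ι f)) (hι₂ : ∀ f, G.ι (e₂ f) = e₂ (G.ι f)) :
    edgePerm (e₁ * e₂) hι = edgePerm e₁ hι₁ * edgePerm e₂ hι₂ := by
  ext e
  induction e using Quotient.inductionOn
  rfl

theorem markedPerm_mul (e₁ e₂ : Equiv.Perm G.F)
    (hm : ∀ f, f ∈ G.marked ↔ (e₁ * e₂) f ∈ G.marked)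
    (hm₁ : ∀ f, f ∈ G.marked ↔ e₁ f ∈ G.marked) (hm₂ : ∀ f, f ∈ G.marked ↔ e₂ f ∈ G.marked) :
    markedPerm (e₁ * e₂) hm = markedPerm e₁ hm₁ * markedPerm e₂ hm₂ :=
  rfl

theorem chi_mul (e₁ e₂ : Equiv.Perm G.F) (hι : ∀ f, G.ι ((e₁ * e₂) f) = (e₁ * e₂) (G.ι f))
    (hm : ∀ f, f ∈ G.marked ↔ (e₁ * e₂) f ∈ G.marked)
    (hι₁ : ∀ f, G.ι (e₁ f) = e₁ (G.ι f)) (hm₁ : ∀ f, f ∈ G.marked ↔ e₁ f ∈ G.marked)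
    (hι₂ : ∀ f, G.ι (e₂ f) = e₂ (G.ι f)) (hm₂ : ∀ f, f ∈ G.marked ↔ e₂ f ∈ G.marked) :
    chi (e₁ * e₂) hι hm = chi e₁ hι₁ hm₁ * chi e₂ hι₂ hm₂ := by
  simp only [chi, edgePerm_mul e₁ e₂ hι hι₁ hι₂, markedPerm_mul e₁ e₂ hm hm₁ hm₂, map_mul]
  exact mul_mul_mul_comm _ _ _ _

theorem chi_eq_one_of_forall_nonLeg (hcore : G.NoMarkedLegs) (eF : Equiv.Perm G.F)
    (hι : ∀ f, G.ι (eF f) = eF (G.ι f)) (hm : ∀ f, f ∈ G.marked ↔ eF f ∈ G.marked)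
    (hfix : ∀ f, G.ι f ≠ f → eF f = f) :
    chi eF hι hm = 1 := by
  have hedge : edgePerm eF hι = 1 := by
    ext e
    induction e using Quotient.inductionOn with
    | h x => exact congrArg _ (Subtype.ext (hfix x x.2))
  have hmarked : markedPerm eF hm = 1 :=
    Equiv.ext fun y => Subtype.ext (hfix y (hcore y y.2))
  rw [chi, hedge, hmarked, map_one, map_one, mul_one]

theorem ι_swap_of_legs {l l' : G.F} (hl : G.ι l = l) (hl' : G.ι l' = l') (f : G.F) :
    G.ι (Equiv.swap l l' f) = Equiv.swap l l' (G.ι f) := by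
  have := G.ι_invol
  simp only [Equiv.swap_apply_def]
  grind

theorem mem_marked_swap_of_legs (hcore : G.NoMarkedLegs) {l l' : G.F} (hl : G.ι l = l)
    (hl' : G.ι l' = l') (f : G.F) :
    f ∈ G.marked ↔ Equiv.swap l l' f ∈ G.marked := by
  have := hcore l
  have := hcore l'
  simp only [Equiv.swap_apply_def]
  grind

def edgeSwap (G : MGraph) (x y : G.F) : Equiv.Perm G.F :=
  Equiv.swap x y * Equiv.swap (G.ι x) (G.ι y)

theorem edgeSwap_apply (x y f : G.F) :
    G.edgeSwap x y f = Equiv.swap x y (Equiv.swap (G.ι x) (G.ι y) f) :=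
  rfl

variable {x y : G.F}

theorem ι_ne_self_of_ι_mem (hx : G.ι x ∈ G.marked) (hx' : x ∉ G.marked) : G.ι x ≠ x :=
  fun h => hx' (h ▸ hx)

theorem ι_edgeSwap (hx : G.ι x ∈ G.marked) (hy : G.ι y ∈ G.marked) (hx' : x ∉ G.marked)
    (hy' : y ∉ G.marked) (f : G.F) :
    G.ι (G.edgeSwap x y f) = G.edgeSwap x y (G.ι f) := by
  have := G.ι_invol
  simp only [edgeSwap_apply, Equiv.swap_apply_def]
  grind

theorem mem_marked_edgeSwap (hx : G.ι x ∈ G.marked) (hy : G.ι y ∈ G.marked)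
    (hx' : x ∉ G.marked) (hy' : y ∉ G.marked) (f : G.F) :
    f ∈ G.marked ↔ G.edgeSwap x y f ∈ G.marked := by
  simp only [edgeSwap_apply, Equiv.swap_apply_def]
  grind

theorem edgeSwap_apply_of_leg (hx : G.ι x ∈ G.marked) (hy : G.ι y ∈ G.marked)
    (hx' : x ∉ G.marked) (hy' : y ∉ G.marked) {f : G.F} (hf : G.ι f = f) :
    G.edgeSwap x y f = f := by
  have := G.ι_invol
  simp only [edgeSwap_apply, Equiv.swap_apply_def]
  grind

theorem edgeSetoid_mk_eq_iff {u v : G.NonLegs} :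
    (⟦u⟧ : G.Edge) = ⟦v⟧ ↔ (v : G.F) = u ∨ (v : G.F) = G.ι u :=
  Quotient.eq

theorem edgePerm_edgeSwap (hx : G.ι x ∈ G.marked) (hy : G.ι y ∈ G.marked)
    (hx' : x ∉ G.marked) (hy' : y ∉ G.marked) (hxy : x ≠ y) :
    edgePerm (G.edgeSwap x y) (ι_edgeSwap hx hy hx' hy') =
      Equiv.swap ⟦⟨x, ι_ne_self_of_ι_mem hx hx'⟩⟧ ⟦⟨y, ι_ne_self_of_ι_mem hy hy'⟩⟧ := by
  have := G.ι_invol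
  ext e
  induction e using Quotient.inductionOn with
  | h z =>
  rw [edgePerm_mk, Equiv.swap_apply_def]
  split_ifs <;>
    simp only [edgeSetoid_mk_eq_iff, edgeSwap_apply, Equiv.swap_apply_def] at * <;>
    grind

theorem markedPerm_edgeSwap (hx : G.ι x ∈ G.marked) (hy : G.ι y ∈ G.marked)
    (hx' : x ∉ G.marked) (hy' : y ∉ G.marked) :
    markedPerm (G.edgeSwap x y) (mem_marked_edgeSwap hx hy hx' hy') =
      Equiv.swap ⟨G.ι x, hx⟩ ⟨G.ι y, hy⟩ := by
  ext ⟨z, hz⟩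
  simp only [markedPerm, Equiv.subtypeEquiv_apply, edgeSwap_apply, Equiv.swap_apply_def]
  split_ifs <;> grind

theorem chi_edgeSwap (hx : G.ι x ∈ G.marked) (hy : G.ι y ∈ G.marked)
    (hx' : x ∉ G.marked) (hy' : y ∉ G.marked) (hxy : x ≠ y)
    (hι : ∀ f, G.ι (G.edgeSwap x y f) = G.edgeSwap x y (G.ι f))
    (hm : ∀ f, f ∈ G.marked ↔ G.edgeSwap x y f ∈ G.marked) :
    chi (G.edgeSwap x y) hι hm = 1 := by
  rw [chi, edgePerm_edgeSwap hx hy hx' hy' hxy, markedPerm_edgeSwap hx hy hx' hy',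
    Equiv.Perm.sign_swap, Equiv.Perm.sign_swap]
  · rfl
  · exact fun h => hxy (G.ι_injective (congrArg Subtype.val h))
  · intro h
    obtain h | h := edgeSetoid_mk_eq_iff.mp h
    · exact hxy h.symm
    · exact hx' (by simp only at h; rw [← G.ι_invol x, ← h]; exact hy)

theorem a_swap_of_ne {p q f : G.F} (hp : G.a f ≠ G.a p) (hq : G.a f ≠ G.a q) :
    G.a (Equiv.swap p q f) = G.a f := by
  rw [Equiv.swap_apply_of_ne_of_ne (fun h => hp (congrArg G.a h)) (fun h => hq (congrArg G.a h))]

theorem a_edgeSwap_of_ne (hι : G.a (G.ι x) = G.a (G.ι y)) {f : G.F} (hx : G.a f ≠ G.a x)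
    (hy : G.a f ≠ G.a y) :
    G.a (G.edgeSwap x y f) = G.a f := by
  have h := Equiv.apply_swap_eq_self hι f
  rw [edgeSwap_apply, a_swap_of_ne (h ▸ hx) (h ▸ hy), h]

end FlagPermutations

variable {n : ℕ} (lab : Fin n ≃ {f : G.F // G.ι f = f})

section SwapActsTrivially

/-- The transposition `(i j)` lies in `I_γ` and, by `CanonicalCoinvRep`, acts trivially on
`det(γ)_{Aut(γ)}`. -/
def SwapActsTrivially (i j : Fin n) : Prop :=
  ∃ eV eF, ∃ h : G.IsIso (G.relabel (Equiv.swap i j) lab) lab eV eF,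
    chi eF h.comm_ι h.mem_marked = 1

variable {lab}

theorem SwapActsTrivially.of_swap_mul (hcore : G.NoMarkedLegs) {i j : Fin n}
    (eV : Equiv.Perm G.V) (ρ : Equiv.Perm G.F)
    (hρι : ∀ f, G.ι (ρ f) = ρ (G.ι f)) (hρm : ∀ f, f ∈ G.marked ↔ ρ f ∈ G.marked)
    (hρleg : ∀ f, G.ι f = f → ρ f = f) (hχ : chi ρ hρι hρm = 1) (hdv : eV G.dv = G.dv)
    (ha : ∀ f, G.a (Equiv.swap (lab i : G.F) (lab j) (ρ f)) = eV (G.a f)) :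
    SwapActsTrivially lab i j := by
  have hl := (lab i).2
  have hl' := (lab j).2
  have hι₁ := ι_swap_of_legs hl hl'
  have hm₁ := mem_marked_swap_of_legs hcore hl hl'
  have hι : ∀ f, G.ι ((Equiv.swap (lab i : G.F) (lab j) * ρ) f) =
      (Equiv.swap (lab i : G.F) (lab j) * ρ) (G.ι f) := fun f => by
    rw [Equiv.Perm.mul_apply, hι₁, hρι]; rfl
  have hm : ∀ f, f ∈ G.marked ↔ (Equiv.swap (lab i : G.F) (lab j) * ρ) f ∈ G.marked :=
    fun f => (hρm f).trans (hm₁ _)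
  refine ⟨eV, _, ⟨ha, hι, hdv, hm, fun k => ?_⟩, ?_⟩
  · change Equiv.swap (lab i : G.F) (lab j) (ρ (lab ((Equiv.swap i j).symm k))) = lab k
    have hinj : Function.Injective fun k => (lab k : G.F) :=
      Subtype.val_injective.comp lab.injective
    rw [Equiv.symm_swap, hρleg _ (lab _).2, hinj.swap_apply, Equiv.swap_apply_self]
  · have hfix : ∀ f, G.ι f ≠ f → Equiv.swap (lab i : G.F) (lab j) f = f := fun f hf =>
      Equiv.swap_apply_of_ne_of_ne (fun h => hf (h ▸ hl)) (fun h => hf (h ▸ hl'))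
    rw [chi_mul _ _ hι hm hι₁ hm₁ hρι hρm, chi_eq_one_of_forall_nonLeg hcore _ _ _ hfix, hχ,
      one_mul]

theorem SwapActsTrivially.of_a_eq (hcore : G.NoMarkedLegs) {i j : Fin n}
    (h : G.a (lab i) = G.a (lab j)) :
    SwapActsTrivially lab i j :=
  .of_swap_mul hcore 1 1 (fun _ => rfl) (fun _ => Iff.rfl) (fun _ _ => rfl)
    (chi_eq_one_of_forall_nonLeg hcore _ _ _ fun _ _ => rfl) rfl (Equiv.apply_swap_eq_self h)

variable (G) in
/-- A neutral vertex `w` joined to the distinguished vertex by two edges, both marked there, and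
carrying the single leg `l`. -/
structure IsMarkedDigon (w : G.V) (l x₁ x₂ : G.F) : Prop where
  ne_dv : w ≠ G.dv
  leg : G.ι l = l
  a_leg : G.a l = w
  a_fst : G.a x₁ = w
  a_snd : G.a x₂ = w
  fst_ne_snd : x₁ ≠ x₂
  ι_fst_mem : G.ι x₁ ∈ G.marked
  ι_snd_mem : G.ι x₂ ∈ G.marked
  eq_of_a_eq : ∀ f, G.a f = w → f = l ∨ f = x₁ ∨ f = x₂

theorem not_mem_marked_of_a_ne {f : G.F} (hf : G.a f ≠ G.dv) : f ∉ G.marked :=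
  fun h => hf (G.marked_adj f h)

theorem IsMarkedDigon.a_swap_edgeSwap {w w' : G.V} {l x₁ x₂ l' x₁' x₂' : G.F}
    (D : G.IsMarkedDigon w l x₁ x₂) (D' : G.IsMarkedDigon w' l' x₁' x₂') (hww' : w ≠ w')
    (f : G.F) :
    G.a (Equiv.swap l l' (G.edgeSwap x₁ x₁' (G.edgeSwap x₂ x₂' f))) =
      Equiv.swap w w' (G.a f) := by
  have := G.ι_invol
  obtain ⟨hw, hl, hlw, hx₁, hx₂, hx₁₂, hy₁, hy₂, hcov⟩ := D
  obtain ⟨hw', hl', hlw', hx₁', hx₂', hx₁₂', hy₁', hy₂', hcov'⟩ := D'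
  replace hy₁ := G.marked_adj _ hy₁
  replace hy₂ := G.marked_adj _ hy₂
  replace hy₁' := G.marked_adj _ hy₁'
  replace hy₂' := G.marked_adj _ hy₂'
  by_cases hfw : G.a f = w
  · rcases hcov f hfw with rfl | rfl | rfl <;>
      simp only [edgeSwap_apply, Equiv.swap_apply_def] <;> grind
  by_cases hfw' : G.a f = w'
  · rcases hcov' f hfw' with rfl | rfl | rfl <;>
      simp only [edgeSwap_apply, Equiv.swap_apply_def] <;> grind
  -- away from `w` and `w'` only the marked half-edges move, and they stay at `dv`
  have h₂ : G.a (G.edgeSwap x₂ x₂' f) = G.a f :=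
    a_edgeSwap_of_ne (hy₂.trans hy₂'.symm) (hx₂ ▸ hfw) (hx₂' ▸ hfw')
  have h₁ : G.a (G.edgeSwap x₁ x₁' (G.edgeSwap x₂ x₂' f)) = G.a f := by
    rw [a_edgeSwap_of_ne (hy₁.trans hy₁'.symm) (hx₁ ▸ h₂ ▸ hfw) (hx₁' ▸ h₂ ▸ hfw'), h₂]
  rw [Equiv.swap_apply_of_ne_of_ne hfw hfw', a_swap_of_ne (hlw ▸ h₁ ▸ hfw) (hlw' ▸ h₁ ▸ hfw'),
    h₁]

theorem SwapActsTrivially.of_isMarkedDigon (hcore : G.NoMarkedLegs) {i j : Fin n}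
    {w w' : G.V} {x₁ x₂ x₁' x₂' : G.F} (D : G.IsMarkedDigon w (lab i) x₁ x₂)
    (D' : G.IsMarkedDigon w' (lab j) x₁' x₂') (hww' : w ≠ w') :
    SwapActsTrivially lab i j := by
  have hx₁ := not_mem_marked_of_a_ne (D.a_fst ▸ D.ne_dv)
  have hx₂ := not_mem_marked_of_a_ne (D.a_snd ▸ D.ne_dv)
  have hx₁' := not_mem_marked_of_a_ne (D'.a_fst ▸ D'.ne_dv)
  have hx₂' := not_mem_marked_of_a_ne (D'.a_snd ▸ D'.ne_dv)
  have hι₁ := ι_edgeSwap D.ι_fst_mem D'.ι_fst_mem hx₁ hx₁'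
  have hι₂ := ι_edgeSwap D.ι_snd_mem D'.ι_snd_mem hx₂ hx₂'
  have hm₁ := mem_marked_edgeSwap D.ι_fst_mem D'.ι_fst_mem hx₁ hx₁'
  have hm₂ := mem_marked_edgeSwap D.ι_snd_mem D'.ι_snd_mem hx₂ hx₂'
  set ρ := G.edgeSwap x₁ x₁' * G.edgeSwap x₂ x₂'
  have hι : ∀ f, G.ι (ρ f) = ρ (G.ι f) := fun f => by
    simp only [ρ, Equiv.Perm.mul_apply, hι₁, hι₂]
  have hm : ∀ f, f ∈ G.marked ↔ ρ f ∈ G.marked := fun f => (hm₂ f).trans (hm₁ _)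
  refine .of_swap_mul hcore (Equiv.swap w w') ρ hι hm
    (fun f hf => by
      simp only [ρ, Equiv.Perm.mul_apply,
        edgeSwap_apply_of_leg D.ι_snd_mem D'.ι_snd_mem hx₂ hx₂' hf,
        edgeSwap_apply_of_leg D.ι_fst_mem D'.ι_fst_mem hx₁ hx₁' hf])
    ?_ (Equiv.swap_apply_of_ne_of_ne D.ne_dv.symm D'.ne_dv.symm) (fun f => ?_)
  · have hne₁ : x₁ ≠ x₁' := fun h => hww' (D.a_fst ▸ D'.a_fst ▸ congrArg G.a h)
    have hne₂ : x₂ ≠ x₂' := fun h => hww' (D.a_snd ▸ D'.a_snd ▸ congrArg G.a h)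
    rw [chi_mul _ _ hι hm hι₁ hm₁ hι₂ hm₂,
      chi_edgeSwap D.ι_fst_mem D'.ι_fst_mem hx₁ hx₁' hne₁,
      chi_edgeSwap D.ι_snd_mem D'.ι_snd_mem hx₂ hx₂' hne₂, one_mul]
  · exact D.a_swap_edgeSwap D' hww' f

end SwapActsTrivially

section Counting

open Finset

variable (G) in
def legsAt (w : G.V) : Finset G.F := {f | G.ι f = f ∧ G.a f = w}

variable (G) in
def halfEdgesAt (w : G.V) : Finset G.F := {f | G.ι f ≠ f ∧ G.a f = w}

variable (G) in
def dvHalfEdgesTo (w : G.V) : Finset G.F := {f ∈ G.halfEdgesAt G.dv | G.a (G.ι f) = w}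

variable (G) in
def markedTo (w : G.V) : Finset G.F := {f ∈ G.marked | G.a (G.ι f) = w}

theorem sum_card_legsAt : ∑ w, #(G.legsAt w) = G.numLegs := by
  rw [numLegs, Fintype.card_subtype, card_eq_sum_card_fiberwise (f := G.a) (t := univ)
    (fun _ _ => mem_coe.mpr (mem_univ _))]
  simp only [legsAt, filter_filter]

theorem sum_card_halfEdgesAt : ∑ w, #(G.halfEdgesAt w) = 2 * G.numEdges := by
  have hsupp : (Function.Involutive.toPerm G.ι G.ι_invol).support =
      ({f | G.ι f ≠ f} : Finset G.F) := by
    ext f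
    simp only [Equiv.Perm.mem_support, mem_filter, mem_univ, true_and]
    rfl
  have heven : 2 ∣ Fintype.card {f : G.F // G.ι f ≠ f} := by
    rw [Fintype.card_subtype, ← hsupp]
    exact Equiv.Perm.two_dvd_card_support (by ext f; exact G.ι_invol f)
  rw [numEdges, Nat.mul_div_cancel' heven, Fintype.card_subtype,
    card_eq_sum_card_fiberwise (f := G.a) (t := univ) (fun _ _ => mem_coe.mpr (mem_univ _))]
  simp only [halfEdgesAt, filter_filter]

theorem sum_card_dvHalfEdgesTo : ∑ w, #(G.dvHalfEdgesTo w) = #(G.halfEdgesAt G.dv) :=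
  (card_eq_sum_card_fiberwise fun _ _ => mem_coe.mpr (mem_univ _)).symm

theorem sum_card_markedTo : ∑ w, #(G.markedTo w) = #G.marked :=
  (card_eq_sum_card_fiberwise fun _ _ => mem_coe.mpr (mem_univ _)).symm

variable (G) in
def weight (A : Finset G.V) (w : G.V) : ℤ :=
  12 * #(G.markedTo w) + 4 * (if w ∈ A then 1 else 0) - 9 * #(G.dvHalfEdgesTo w)
    - 8 * #(G.legsAt w) + if w = G.dv then 0 else 18 - 9 * (#(G.halfEdgesAt w) : ℤ)

theorem sum_weight {g n r : ℕ} (htype : G.IsType g n r) (A : Finset G.V) :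
    ∑ w, G.weight A w = 12 * r + 4 * #A - 8 * n - 18 * ((g : ℤ) - 1) := by
  obtain ⟨hE, rfl, rfl⟩ := htype
  have hL : ∑ w, (#(G.legsAt w) : ℤ) = G.numLegs := by exact_mod_cast sum_card_legsAt
  have he : ∑ w, (#(G.halfEdgesAt w) : ℤ) = 2 * G.numEdges := by
    exact_mod_cast sum_card_halfEdgesAt
  have hd : ∑ w, (#(G.dvHalfEdgesTo w) : ℤ) = #(G.halfEdgesAt G.dv) := by
    exact_mod_cast sum_card_dvHalfEdgesTo
  have hm : ∑ w, (#(G.markedTo w) : ℤ) = #G.marked := by exact_mod_cast sum_card_markedTo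
  have hs : ∑ w, (if w ∈ A then (1 : ℤ) else 0) = #A := by
    rw [sum_boole, filter_mem_eq_inter, univ_inter]
  have hneutral : ∑ w, (if w = G.dv then (0 : ℤ) else 18 - 9 * #(G.halfEdgesAt w)) =
      ∑ w, (18 - 9 * (#(G.halfEdgesAt w) : ℤ)) - (18 - 9 * #(G.halfEdgesAt G.dv)) := by
    rw [eq_sub_iff_add_eq, ← add_sum_erase _ _ (mem_univ G.dv), if_pos rfl, zero_add,
      add_comm, ← add_sum_erase _ _ (mem_univ G.dv)]
    exact congrArg _ (sum_congr rfl fun w hw => if_neg (ne_of_mem_erase hw))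
  have hE' : (G.numEdges : ℤ) + 2 = Fintype.card G.V + g := by exact_mod_cast hE
  simp only [weight, sum_add_distrib, sum_sub_distrib, ← mul_sum, hneutral, hL, he, hd, hm, hs,
    sum_const, card_univ, nsmul_eq_mul]
  linarith

theorem markedTo_subset (hcore : G.NoMarkedLegs) (w : G.V) :
    G.markedTo w ⊆ G.dvHalfEdgesTo w := by
  intro f hf
  simp only [markedTo, dvHalfEdgesTo, halfEdgesAt, mem_filter, mem_univ, true_and] at hf ⊢
  exact ⟨⟨hcore f hf.1, G.marked_adj f hf.1⟩, hf.2⟩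

theorem image_ι_dvHalfEdgesTo_subset (w : G.V) :
    (G.dvHalfEdgesTo w).image G.ι ⊆ G.halfEdgesAt w := by
  intro f hf
  obtain ⟨y, hy, rfl⟩ := mem_image.mp hf
  simp only [dvHalfEdgesTo, halfEdgesAt, mem_filter, mem_univ, true_and] at hy ⊢
  exact ⟨fun h => hy.1.1 (by rw [G.ι_invol] at h; exact h.symm), hy.2⟩

theorem card_dvHalfEdgesTo_le (w : G.V) : #(G.dvHalfEdgesTo w) ≤ #(G.halfEdgesAt w) := by
  rw [← card_image_of_injective _ ι_injective]
  exact card_le_card (image_ι_dvHalfEdgesTo_subset w)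

/-- No edge is marked at both ends, so `ι` moves the marked half-edges of loops at the
distinguished vertex to unmarked ones. -/
theorem two_mul_card_markedTo_dv_le (hadm : G.Admissible) (hcore : G.NoMarkedLegs) :
    2 * #(G.markedTo G.dv) ≤ #(G.dvHalfEdgesTo G.dv) := by
  have hdisj : Disjoint (G.markedTo G.dv) ((G.markedTo G.dv).image G.ι) := by
    rw [disjoint_right]
    intro f hf hf'
    obtain ⟨y, hy, rfl⟩ := mem_image.mp hf
    have hy := (mem_filter.mp hy).1
    exact hcore y hy (hadm.2.2 y hy (mem_filter.mp hf').1)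
  have hsub : (G.markedTo G.dv).image G.ι ⊆ G.dvHalfEdgesTo G.dv := by
    intro f hf
    obtain ⟨y, hy, rfl⟩ := mem_image.mp hf
    simp only [markedTo, mem_filter] at hy
    simp only [dvHalfEdgesTo, halfEdgesAt, mem_filter, mem_univ, true_and, G.ι_invol]
    exact ⟨⟨fun h => hcore y hy.1 h.symm, hy.2⟩, G.marked_adj y hy.1⟩
  calc 2 * #(G.markedTo G.dv)
      = #(G.markedTo G.dv ∪ (G.markedTo G.dv).image G.ι) := by
        rw [card_union_of_disjoint hdisj, card_image_of_injective _ ι_injective, two_mul]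
    _ ≤ #(G.dvHalfEdgesTo G.dv) := card_le_card (union_subset (markedTo_subset hcore _) hsub)

theorem three_le_card_legsAt_add_card_halfEdgesAt (hadm : G.Admissible) {w : G.V}
    (hw : w ≠ G.dv) : 3 ≤ #(G.legsAt w) + #(G.halfEdgesAt w) := by
  have h := hadm.1 w hw
  rw [Fintype.card_subtype, ← card_filter_add_card_filter_not (fun f => G.ι f = f),
    filter_filter, filter_filter] at h
  simpa only [legsAt, halfEdgesAt, and_comm] using h

theorem card_halfEdgesAt_pos (hconn : G.Connected) {w : G.V} (hw : w ≠ G.dv) :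
    0 < #(G.halfEdgesAt w) := by
  obtain h | ⟨_, ⟨f, hf, hfw, _⟩, _⟩ := Relation.ReflTransGen.cases_head (hconn w G.dv)
  · exact absurd h hw
  · exact card_pos.mpr ⟨f, mem_filter.mpr ⟨mem_univ _, hf, hfw⟩⟩

theorem IsMarkedDigon.eq_leg {w : G.V} {l x₁ x₂ f : G.F} (D : G.IsMarkedDigon w l x₁ x₂)
    (hf : G.a f = w) (hleg : G.ι f = f) : f = l := by
  have hx : ∀ x, G.a x = w → G.ι x ∈ G.marked → G.ι x ≠ x := fun x hx hιx h =>
    D.ne_dv (hx ▸ h ▸ G.marked_adj _ hιx)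
  rcases D.eq_of_a_eq f hf with h | rfl | rfl
  · exact h
  · exact absurd hleg (hx _ D.a_fst D.ι_fst_mem)
  · exact absurd hleg (hx _ D.a_snd D.ι_snd_mem)

theorem exists_isMarkedDigon (hcore : G.NoMarkedLegs) {w : G.V} (hw : w ≠ G.dv) {l : G.F}
    (hl : l ∈ G.legsAt w) (hL : #(G.legsAt w) = 1) (he : #(G.halfEdgesAt w) = 2)
    (hm : #(G.markedTo w) = 2) :
    ∃ x₁ x₂, G.IsMarkedDigon w l x₁ x₂ := by
  have himage : (G.markedTo w).image G.ι = G.halfEdgesAt w := by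
    refine eq_of_subset_of_card_le ((image_subset_image (markedTo_subset hcore w)).trans
      (image_ι_dvHalfEdgesTo_subset w)) ?_
    rw [card_image_of_injective _ ι_injective, he, hm]
  obtain ⟨y₁, y₂, hy, hmk⟩ := card_eq_two.mp hm
  have hy₁ : y₁ ∈ G.markedTo w := hmk ▸ mem_insert_self _ _
  have hy₂ : y₂ ∈ G.markedTo w := hmk ▸ mem_insert_of_mem (mem_singleton_self _)
  simp only [markedTo, mem_filter] at hy₁ hy₂
  simp only [legsAt, mem_filter, mem_univ, true_and] at hl
  refine ⟨G.ι y₁, G.ι y₂, ⟨hw, hl.1, hl.2, hy₁.2, hy₂.2, fun h => hy (ι_injective h),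
    (G.ι_invol y₁).symm ▸ hy₁.1, (G.ι_invol y₂).symm ▸ hy₂.1, fun f hf => ?_⟩⟩
  by_cases hleg : G.ι f = f
  · exact Or.inl (card_le_one.mp hL.le f (by simp [legsAt, hleg, hf]) l (by simp [legsAt, hl]))
  · have : f ∈ (G.markedTo w).image G.ι := himage ▸ by simp [halfEdgesAt, hleg, hf]
    rw [hmk] at this
    exact Or.inr (by simpa using this)

theorem weight_dv_nonpos (hadm : G.Admissible) (hcore : G.NoMarkedLegs) {A : Finset G.V}
    (hA : ∀ w ∈ A, (G.legsAt w).Nonempty) :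
    G.weight A G.dv ≤ 0 := by
  have hm : 2 * (#(G.markedTo G.dv) : ℤ) ≤ #(G.dvHalfEdgesTo G.dv) := by
    exact_mod_cast two_mul_card_markedTo_dv_le hadm hcore
  have hs : (if G.dv ∈ A then (1 : ℤ) else 0) ≤ #(G.legsAt G.dv) := by
    split_ifs with h
    · exact_mod_cast (hA _ h).card_pos
    · positivity
  rw [weight, if_pos rfl]
  linarith

theorem weight_le_two (hconn : G.Connected) (hadm : G.Admissible) (hcore : G.NoMarkedLegs)
    {A : Finset G.V} (hA : ∀ w ∈ A, (G.legsAt w).Nonempty) {w : G.V} (hw : w ≠ G.dv) :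
    G.weight A w ≤ 2 ∧ (0 < G.weight A w → w ∈ A ∧ #(G.legsAt w) = 1 ∧
      #(G.halfEdgesAt w) = 2 ∧ #(G.markedTo w) = 2) := by
  have hmd := card_le_card (markedTo_subset hcore w)
  have hde := card_dvHalfEdgesTo_le w
  have hval := three_le_card_legsAt_add_card_halfEdgesAt hadm hw
  have he := card_halfEdgesAt_pos hconn hw
  by_cases hwA : w ∈ A
  · have := (hA w hwA).card_pos
    simp only [weight, if_neg hw, if_pos hwA]
    exact ⟨by omega, fun h => ⟨hwA, by omega, by omega, by omega⟩⟩
  · simp only [weight, if_neg hw, if_neg hwA]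
    omega

theorem exists_isMarkedDigon_of_weight_pos (hconn : G.Connected) (hadm : G.Admissible)
    (hcore : G.NoMarkedLegs) {A : Finset G.V} (hA : ∀ w ∈ A, (G.legsAt w).Nonempty)
    {w : G.V} (hpos : 0 < G.weight A w) :
    w ∈ A ∧ ∃ l x₁ x₂, G.IsMarkedDigon w l x₁ x₂ := by
  have hw : w ≠ G.dv := by
    rintro rfl
    exact hpos.not_ge (weight_dv_nonpos hadm hcore hA)
  obtain ⟨hwA, hL, he, hm⟩ := (weight_le_two hconn hadm hcore hA hw).2 hpos
  obtain ⟨l, hl⟩ := hA w hwA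
  exact ⟨hwA, l, exists_isMarkedDigon hcore hw hl hL he hm⟩

theorem twelve_mul_add_four_mul_card_le (hconn : G.Connected) (hadm : G.Admissible)
    (hcore : G.NoMarkedLegs) {g n r : ℕ} (htype : G.IsType g n r) (A : Finset G.V)
    (hA : ∀ w ∈ A, (G.legsAt w).Nonempty)
    (hdigon : ∀ w ∈ A, ∀ w' ∈ A, ∀ {l x₁ x₂ l' x₁' x₂'},
      G.IsMarkedDigon w l x₁ x₂ → G.IsMarkedDigon w' l' x₁' x₂' → w = w') :
    12 * (r : ℤ) + 4 * #A ≤ 18 * ((g : ℤ) - 1) + 8 * n + 2 := by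
  have hle : ∑ w, G.weight A w ≤ 2 := by
    refine sum_le_of_subsingleton_pos (by norm_num) (fun w _ => ?_) fun w _ w' _ hw hw' => ?_
    · by_cases hw : w = G.dv
      · exact hw ▸ (weight_dv_nonpos hadm hcore hA).trans (by norm_num)
      · exact (weight_le_two hconn hadm hcore hA hw).1
    · obtain ⟨hwA, _, _, _, D⟩ := exists_isMarkedDigon_of_weight_pos hconn hadm hcore hA hw
      obtain ⟨hwA', _, _, _, D'⟩ := exists_isMarkedDigon_of_weight_pos hconn hadm hcore hA hw'
      exact hdigon w hwA w' hwA' D D'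
  linarith [sum_weight htype A]

end Counting

variable {lab}

theorem twelve_mul_add_four_mul_le_of_pairwise (hconn : G.Connected) (hadm : G.Admissible)
    (hcore : G.NoMarkedLegs) {g r : ℕ} (htype : G.IsType g n r) {k : ℕ} (q : Fin k → Fin n)
    (hq : Pairwise fun x y => ¬ SwapActsTrivially lab (q x) (q y)) :
    12 * (r : ℤ) + 4 * k ≤ 18 * ((g : ℤ) - 1) + 8 * n + 2 := by
  set ψ : Fin k → G.V := fun x => G.a (lab (q x))
  have hψ : Function.Injective ψ := fun x y h => by
    by_contra hxy
    exact hq hxy (.of_a_eq hcore h)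
  have := twelve_mul_add_four_mul_card_le hconn hadm hcore htype (Finset.univ.image ψ) ?_ ?_
  · rwa [Finset.card_image_of_injective _ hψ, Finset.card_univ, Fintype.card_fin] at this
  · intro w hw
    obtain ⟨x, -, rfl⟩ := Finset.mem_image.mp hw
    exact ⟨lab (q x), by simp [legsAt, (lab (q x)).2, ψ]⟩
  · intro w hw w' hw' l x₁ x₂ l' x₁' x₂' D D'
    obtain ⟨x, -, rfl⟩ := Finset.mem_image.mp hw
    obtain ⟨y, -, rfl⟩ := Finset.mem_image.mp hw'
    by_contra hne
    obtain rfl := D.eq_leg rfl (lab (q x)).2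
    obtain rfl := D'.eq_leg rfl (lab (q y)).2
    exact hq (fun h => hne (congrArg ψ h)) (.of_isMarkedDigon hcore D D' hne)

variable {H : Subgroup (Equiv.Perm (Fin n))} {θ : Representation ℚ H (G.detCoinv lab)}

theorem apply_eq_zero_of_swapActsTrivially (hH : (H : Set (Equiv.Perm (Fin n))) = G.ISet lab)
    (hθ : G.CanonicalCoinvRep lab H θ) (v : indCarrier H θ) (p : Equiv.Perm (Fin n))
    {a b : Fin n} (hv : indRep H θ (Equiv.swap a b) v = -v)
    (hpair : SwapActsTrivially lab (p a) (p b)) :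
    (v : Equiv.Perm (Fin n) → G.detCoinv lab) p = 0 := by
  obtain ⟨eV, eF, hiso, hχ⟩ := hpair
  have hmem : Equiv.swap (p a) (p b) ∈ H := by
    rw [← SetLike.mem_coe, hH]
    exact ⟨eV, eF, hiso⟩
  refine indCarrier_apply_eq_zero v p ⟨_, hmem⟩ (fun x => ?_) ?_
  · obtain ⟨y, rfl⟩ : ∃ y, G.detCoinvMk lab y = x := Submodule.mkQ_surjective _ x
    rw [hθ _ hmem eV eF hiso y, hχ, Units.val_one, Int.cast_one, one_mul]
  · have hconj : p⁻¹ * Equiv.swap (p a) (p b) * p = Equiv.swap a b := by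
      rw [Equiv.swap_apply_apply]
      group
    exact hconj ▸ hv

theorem exists_pairwise_not_swapActsTrivially
    (hH : (H : Set (Equiv.Perm (Fin n))) = G.ISet lab) (hθ : G.CanonicalCoinvRep lab H θ)
    {k : ℕ} (hk : k ≤ n) {v : indCarrier H θ} (hv : v ≠ 0)
    (hsign : ∀ σ : Equiv.Perm (Fin k),
      indRep H θ (Equiv.Perm.viaEmbeddingHom (Fin.castLEEmb hk) σ) v =
        ((Equiv.Perm.sign σ : ℤ) : ℚ) • v) :
    ∃ p : Equiv.Perm (Fin n), Pairwise fun x y : Fin k =>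
      ¬ SwapActsTrivially lab (p (Fin.castLE hk x)) (p (Fin.castLE hk y)) := by
  obtain ⟨p, hp⟩ := Function.ne_iff.mp fun h => hv (Subtype.ext h)
  refine ⟨p, fun x y hxy hpair => hp (apply_eq_zero_of_swapActsTrivially hH hθ v p ?_ hpair)⟩
  have := hsign (Equiv.swap x y)
  rw [Equiv.Perm.viaEmbeddingHom_apply, Equiv.Perm.viaEmbedding_swap,
    Equiv.Perm.sign_swap hxy, Units.val_neg, Units.val_one, Int.cast_neg, Int.cast_one] at this
  exact this.trans (neg_one_smul ℚ v)

theorem twelve_mul_add_four_mul_rhoRep_le (hconn : G.Connected) (hadm : G.Admissible)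
    (hcore : G.NoMarkedLegs) {g r : ℕ} (htype : G.IsType g n r)
    (hH : (H : Set (Equiv.Perm (Fin n))) = G.ISet lab) (hθ : G.CanonicalCoinvRep lab H θ) :
    12 * (r : ℤ) + 4 * rhoRep (indRep H θ) ≤ 18 * ((g : ℤ) - 1) + 8 * n + 2 := by
  rcases rhoRep_eq_zero_or (indRep H θ) with h | ⟨hk, v, hv, hsign⟩
  · simpa [h] using twelve_mul_add_four_mul_le_of_pairwise hconn hadm hcore htype (lab := lab)
      Fin.elim0 Subsingleton.pairwise
  · obtain ⟨p, hp⟩ := exists_pairwise_not_swapActsTrivially hH hθ hk hv hsign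
    exact twelve_mul_add_four_mul_le_of_pairwise hconn hadm hcore htype _ hp

end MGraph

theorem core_graph_row_bound_general (g : ℕ) (ℓ : ℤ)
    (G : MGraph) (n r : ℕ) (lab : Fin n ≃ {f : G.F // G.ι f = f})
    (hconn : G.Connected) (hadm : G.Admissible) (hcore : G.NoMarkedLegs)
    (htype : G.IsType g n r) (hnr : (n : ℤ) - (r : ℤ) ≤ ℓ)
    (H : Subgroup (Equiv.Perm (Fin n)))
    (hH : (H : Set (Equiv.Perm (Fin n))) = G.ISet lab)
    (θ : Representation ℚ H (G.detCoinv lab))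
    (hθ : G.CanonicalCoinvRep lab H θ) :
    (n : ℤ) + (rhoRep (indRep H θ) : ℤ) ≤
      ⌈(9 * ((g : ℚ) - 1)) / 2⌉ + 3 * ((n : ℤ) - (r : ℤ)) ∧
    ⌈(9 * ((g : ℚ) - 1)) / 2⌉ + 3 * ((n : ℤ) - (r : ℤ)) ≤
      ⌈(3 * (3 * ((g : ℚ) - 1) + 2 * (ℓ : ℚ))) / 2⌉ := by
  have hceil : 9 * ((g : ℤ) - 1) ≤ 2 * ⌈(9 * ((g : ℚ) - 1)) / 2⌉ := by
    have hle := Int.le_ceil ((9 * ((g : ℚ) - 1)) / 2)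
    have hle' : (9 * ((g : ℤ) - 1) : ℚ) ≤ 2 * ⌈(9 * ((g : ℚ) - 1)) / 2⌉ := by
      push_cast
      linarith
    exact_mod_cast hle'
  have hρ := twelve_mul_add_four_mul_rhoRep_le hconn hadm hcore htype hH hθ
  refine ⟨by omega, ?_⟩
  rw [show (3 * (3 * ((g : ℚ) - 1) + 2 * (ℓ : ℚ))) / 2 = (9 * ((g : ℚ) - 1)) / 2 + (3 * ℓ : ℤ) by
    push_cast; ring, Int.ceil_add_intCast]
  omega

/-- fix `g ≥ 1` and `ℓ` with `m := 3(g−1) + 2ℓ ≥ 0`.  For every core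
graph `ξ` of type `(g, n, r)` with `n − r ≤ ℓ`, with leg labeling `lab`, subgroup
`H = I_γ` and canonical action `θ` on `det(γ)_{Aut(γ)}`, the `Sₙ`-module
`A_ξ = Ind_{I_γ}^{S_n}(det(γ)_{Aut(γ)})` satisfies
`n + ρ(A_ξ) ≤ ⌈9(g−1)/2⌉ + 3(n−r) ≤ ⌈3m/2⌉`. -/
theorem core_graph_row_bound (g : ℕ) (hg : 1 ≤ g) (ℓ : ℤ)
    (hm : 0 ≤ 3 * ((g : ℤ) - 1) + 2 * ℓ)
    (G : MGraph) (n r : ℕ) (lab : Fin n ≃ {f : G.F // G.ι f = f})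
    (hconn : G.Connected) (hadm : G.Admissible) (hcore : G.NoMarkedLegs)
    (htype : G.IsType g n r) (hnr : (n : ℤ) - (r : ℤ) ≤ ℓ)
    (H : Subgroup (Equiv.Perm (Fin n)))
    (hH : (H : Set (Equiv.Perm (Fin n))) = G.ISet lab)
    (θ : Representation ℚ H (G.detCoinv lab))
    (hθ : G.CanonicalCoinvRep lab H θ) :
    (n : ℤ) + (rhoRep (indRep H θ) : ℤ) ≤
      ⌈(9 * ((g : ℚ) - 1)) / 2⌉ + 3 * ((n : ℤ) - (r : ℤ)) ∧
    ⌈(9 * ((g : ℚ) - 1)) / 2⌉ + 3 * ((n : ℤ) - (r : ℤ)) ≤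
      ⌈(3 * (3 * ((g : ℚ) - 1) + 2 * (ℓ : ℚ))) / 2⌉ :=
  core_graph_row_bound_general g ℓ G n r lab hconn hadm hcore htype hnr H hH θ hθ
end
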